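/- arXiv:2506.22730 — 3 statements merged into one kernel-verified Lean document; each statement's English description precedes it below -/
import Mathlib

section
/- A subset F of 𝒫 is a maximal diagonal-free subset if and only if there exist integers m = g₀ ≥ g₁ ≥ … ≥ g_{r−1} ≥ g_r = 1 and n = h₀ ≥ h₁ ≥ … ≥ h_{r−1} ≥ h_r = 1 such that, under the identification of (i,j,k) with (i, (k−1)n+j), F is the union over k = 1, …, r of the paths from (g_{k−1}, (k−1)n + h_k) to (g_k, (k−1)n + h_{k−1}). -/
/-- The vertex set `𝒫 = {1,…,m} × {1,…,n} × {1,…,r}`, a point `(i,j,k)` recording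
the row `i`, column `j` and matrix index `k`. -/
def gridP (m n r : ℕ) : Set (ℕ × ℕ × ℕ) :=
  {p | 1 ≤ p.1 ∧ p.1 ≤ m ∧ 1 ≤ p.2.1 ∧ p.2.1 ≤ n ∧ 1 ≤ p.2.2 ∧ p.2.2 ≤ r}

/-- `(i,j,k)`, `(i',j',k')` form a *diagonal pair* if (a) `k = k'`, `i < i'`, `j < j'`,
or (b) `k < k'` and `i < i'`, or (c) `k < k'` and `j < j'`. -/
def DiagPair (p q : ℕ × ℕ × ℕ) : Prop :=
  (p.2.2 = q.2.2 ∧ p.1 < q.1 ∧ p.2.1 < q.2.1) ∨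
  (p.2.2 < q.2.2 ∧ p.1 < q.1) ∨
  (p.2.2 < q.2.2 ∧ p.2.1 < q.2.1)

/-- A subset of `𝒫` is *diagonal-free* if it contains no diagonal pair.  These are
exactly the faces of the Stanley–Reisner complex of the initial ideal of the double
determinantal ideal with respect to a diagonal term order. -/
def DiagFree (m n r : ℕ) (F : Set (ℕ × ℕ × ℕ)) : Prop :=
  F ⊆ gridP m n r ∧ ∀ p ∈ F, ∀ q ∈ F, ¬ DiagPair p q

/-- A *maximal* diagonal-free subset (a facet of the complex). -/
def MaxDiagFree (m n r : ℕ) (F : Set (ℕ × ℕ × ℕ)) : Prop :=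
  DiagFree m n r F ∧ ∀ G, DiagFree m n r G → F ⊆ G → G = F

/-- `S` is a path from `a` to `b` in the plane: a sequence of points starting at `a`,
ending at `b`, each step being `(-1,0)` or `(0,1)`; a single point is a path. -/
def IsPath (S : Set (ℕ × ℕ)) (a b : ℕ × ℕ) : Prop :=
  ∃ (t : ℕ) (f : ℕ → ℕ × ℕ), f 0 = a ∧ f t = b ∧ S = f '' Set.Iic t ∧
    ∀ s < t, ((f (s + 1)).1 + 1 = (f s).1 ∧ (f (s + 1)).2 = (f s).2) ∨
      ((f (s + 1)).1 = (f s).1 ∧ (f (s + 1)).2 = (f s).2 + 1)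

/-- The identification of `(i,j,k) ∈ 𝒫` with `(i, (k-1)n + j) ∈ {1,…,m} × {1,…,nr}`
(placing the `k`-th matrix in the `k`-th horizontal block). -/
def flatten (n : ℕ) (p : ℕ × ℕ × ℕ) : ℕ × ℕ :=
  (p.1, (p.2.2 - 1) * n + p.2.1)

namespace Stmt13Aux

lemma insert_mem {m n r : ℕ} {F : Set (ℕ × ℕ × ℕ)} (hmax : MaxDiagFree m n r F)
    {x : ℕ × ℕ × ℕ} (hxg : x ∈ gridP m n r)
    (hc : ∀ p ∈ F, ¬ DiagPair p x ∧ ¬ DiagPair x p) : x ∈ F := by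
  have hG : DiagFree m n r (insert x F) := by
    constructor
    · intro p hp
      rcases Set.mem_insert_iff.mp hp with rfl | hp
      · exact hxg
      · exact hmax.1.1 hp
    · have hxx : ¬ DiagPair x x := by simp [DiagPair]
      intro p hp q hq
      rcases Set.mem_insert_iff.mp hp with hp | hp <;>
        rcases Set.mem_insert_iff.mp hq with hq | hq
      · rw [hp, hq]; exact hxx
      · rw [hp]; exact (hc q hq).2
      · rw [hq]; exact (hc p hp).1
      · exact hmax.1.2 p hp q hq
  have h := hmax.2 _ hG (Set.subset_insert x F)
  rw [← h]; exact Set.mem_insert x F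

lemma cross {m n r : ℕ} {F : Set (ℕ × ℕ × ℕ)} (hdf : DiagFree m n r F)
    {p q : ℕ × ℕ × ℕ} (hp : p ∈ F) (hq : q ∈ F) (hk : p.2.2 < q.2.2) :
    q.1 ≤ p.1 ∧ q.2.1 ≤ p.2.1 := by
  have h := hdf.2 p hp q hq
  simp only [DiagPair, not_or, not_and, not_lt] at h
  exact ⟨h.2.1 hk, h.2.2 hk⟩

lemma anti {m n r : ℕ} {F : Set (ℕ × ℕ × ℕ)} (hdf : DiagFree m n r F)
    {p q : ℕ × ℕ × ℕ} (hp : p ∈ F) (hq : q ∈ F) (hk : p.2.2 = q.2.2) :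
    ¬ (p.1 < q.1 ∧ p.2.1 < q.2.1) := by
  have h := hdf.2 p hp q hq
  simp only [DiagPair, not_or] at h
  intro hlt
  exact h.1 ⟨hk, hlt⟩


lemma rows_bdd {m n r : ℕ} {F : Set (ℕ × ℕ × ℕ)} (hF : F ⊆ gridP m n r)
    (S : Set ℕ) (hS : ∀ i ∈ S, ∃ p ∈ F, p.1 = i) : BddAbove S := by
  refine ⟨m, fun i hi => ?_⟩
  obtain ⟨p, hp, rfl⟩ := hS i hi
  exact (hF hp).2.1

lemma cols_bdd {m n r : ℕ} {F : Set (ℕ × ℕ × ℕ)} (hF : F ⊆ gridP m n r)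
    (S : Set ℕ) (hS : ∀ j ∈ S, ∃ p ∈ F, p.2.1 = j) : BddAbove S := by
  refine ⟨n, fun j hj => ?_⟩
  obtain ⟨p, hp, rfl⟩ := hS j hj
  exact (hF hp).2.2.2.1

lemma layer_nonempty {m n r : ℕ} {F : Set (ℕ × ℕ × ℕ)} (hmax : MaxDiagFree m n r F)
    (hm : 0 < m) (hn : 0 < n) {k : ℕ} (hk1 : 1 ≤ k) (hkr : k ≤ r) :
    ∃ p ∈ F, p.2.2 = k := by
  by_contra hemp
  push_neg at hemp
  have hF := hmax.1.1
  set RL : Set ℕ := {i | ∃ p ∈ F, k < p.2.2 ∧ p.1 = i} with hRL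
  set CL : Set ℕ := {j | ∃ p ∈ F, k < p.2.2 ∧ p.2.1 = j} with hCL
  have hRLb : BddAbove RL := rows_bdd hF RL (by rintro i ⟨p, hp, _, rfl⟩; exact ⟨p, hp, rfl⟩)
  have hCLb : BddAbove CL := cols_bdd hF CL (by rintro j ⟨p, hp, _, rfl⟩; exact ⟨p, hp, rfl⟩)
  set x : ℕ × ℕ × ℕ := (max 1 (sSup RL), max 1 (sSup CL), k) with hx
  have hxg : x ∈ gridP m n r := by
    refine ⟨le_max_left _ _, ?_, le_max_left _ _, ?_, hk1, hkr⟩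
    · refine max_le hm ?_
      rcases Set.eq_empty_or_nonempty RL with he | hne
      · rw [he, csSup_empty]; exact Nat.zero_le m
      · obtain ⟨p, hp, _, hpe⟩ := Nat.sSup_mem hne hRLb
        rw [← hpe]; exact (hF hp).2.1
    · refine max_le hn ?_
      rcases Set.eq_empty_or_nonempty CL with he | hne
      · rw [he, csSup_empty]; exact Nat.zero_le n
      · obtain ⟨p, hp, _, hpe⟩ := Nat.sSup_mem hne hCLb
        rw [← hpe]; exact (hF hp).2.2.2.1
  have hmem : x ∈ F := by
    refine insert_mem hmax hxg ?_
    intro p hp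
    have hpk : p.2.2 ≠ k := hemp p hp
    rcases lt_or_gt_of_ne hpk with hlt | hgt
    · -- p earlier: need x ≤ p componentwise
      have hr1 : x.1 ≤ p.1 := by
        refine max_le (hF hp).1 ?_
        rcases Set.eq_empty_or_nonempty RL with he | hne
        · rw [he, csSup_empty]; exact Nat.zero_le _
        · obtain ⟨q, hq, hqk, hqe⟩ := Nat.sSup_mem hne hRLb
          rw [← hqe]
          exact (cross hmax.1 hp hq (lt_trans hlt hqk)).1
      have hr2 : x.2.1 ≤ p.2.1 := by
        refine max_le (hF hp).2.2.1 ?_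
        rcases Set.eq_empty_or_nonempty CL with he | hne
        · rw [he, csSup_empty]; exact Nat.zero_le _
        · obtain ⟨q, hq, hqk, hqe⟩ := Nat.sSup_mem hne hCLb
          rw [← hqe]
          exact (cross hmax.1 hp hq (lt_trans hlt hqk)).2
      constructor
      · simp only [DiagPair, not_or]
        refine ⟨fun h => hpk h.1, fun h => absurd h.2 (not_lt.mpr hr1),
          fun h => absurd h.2 (not_lt.mpr hr2)⟩
      · simp only [DiagPair, not_or]
        exact ⟨fun h => hpk h.1.symm, fun h => absurd h.1 (by show ¬ k < p.2.2; omega),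
          fun h => absurd h.1 (by show ¬ k < p.2.2; omega)⟩
    · -- p later: need p ≤ x componentwise
      have hr1 : p.1 ≤ x.1 := le_trans (le_csSup hRLb ⟨p, hp, hgt, rfl⟩) (le_max_right _ _)
      have hr2 : p.2.1 ≤ x.2.1 := le_trans (le_csSup hCLb ⟨p, hp, hgt, rfl⟩) (le_max_right _ _)
      constructor
      · simp only [DiagPair, not_or]
        exact ⟨fun h => hpk h.1, fun h => absurd h.1 (by show ¬ p.2.2 < k; omega), fun h => absurd h.1 (by show ¬ p.2.2 < k; omega)⟩
      · simp only [DiagPair, not_or]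
        refine ⟨fun h => hpk h.1.symm, fun h => absurd h.2 (not_lt.mpr hr1),
          fun h => absurd h.2 (not_lt.mpr hr2)⟩
  exact hemp x hmem rfl


lemma compat_of (p : ℕ × ℕ × ℕ) (x1 x2 x3 : ℕ)
    (h1 : p.2.2 = x3 → ¬(p.1 < x1 ∧ p.2.1 < x2) ∧ ¬(x1 < p.1 ∧ x2 < p.2.1))
    (h2 : p.2.2 < x3 → x1 ≤ p.1 ∧ x2 ≤ p.2.1)
    (h3 : x3 < p.2.2 → p.1 ≤ x1 ∧ p.2.1 ≤ x2) :
    ¬ DiagPair p (x1, x2, x3) ∧ ¬ DiagPair (x1, x2, x3) p := by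
  simp only [DiagPair]
  omega


section Forward

variable {m n r : ℕ} {F : Set (ℕ × ℕ × ℕ)}

lemma forward (hm : 0 < m) (hn : 0 < n) (hr : 0 < r) (hmax : MaxDiagFree m n r F) :
    ∃ g h : ℕ → ℕ,
      g 0 = m ∧ g r = 1 ∧ h 0 = n ∧ h r = 1 ∧
      (∀ k < r, g (k + 1) ≤ g k) ∧ (∀ k < r, h (k + 1) ≤ h k) ∧
      ∃ S : ℕ → Set (ℕ × ℕ),
        (∀ k, 1 ≤ k → k ≤ r →
          IsPath (S k) (g (k - 1), (k - 1) * n + h k) (g k, (k - 1) * n + h (k - 1))) ∧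
        flatten n '' F = ⋃ k ∈ Set.Icc 1 r, S k := by
  classical
  have hF : F ⊆ gridP m n r := hmax.1.1
  have hdf := hmax.1
  set Row : ℕ → Set ℕ := fun k => {i | ∃ j, (i, j, k) ∈ F} with hRow
  set Col : ℕ → Set ℕ := fun k => {j | ∃ i, (i, j, k) ∈ F} with hCol
  have hRowB : ∀ k, BddAbove (Row k) := by
    intro k
    exact rows_bdd hF (Row k) (by rintro i ⟨j, hj⟩; exact ⟨(i, j, k), hj, rfl⟩)
  have hColB : ∀ k, BddAbove (Col k) := by
    intro k
    exact cols_bdd hF (Col k) (by rintro j ⟨i, hi⟩; exact ⟨(i, j, k), hi, rfl⟩)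
  have hRowNE : ∀ k, 1 ≤ k → k ≤ r → (Row k).Nonempty := by
    intro k hk1 hkr
    obtain ⟨p, hp, hpk⟩ := layer_nonempty hmax hm hn hk1 hkr
    exact ⟨p.1, p.2.1, by rw [← hpk]; exact hp⟩
  have hColNE : ∀ k, 1 ≤ k → k ≤ r → (Col k).Nonempty := by
    intro k hk1 hkr
    obtain ⟨p, hp, hpk⟩ := layer_nonempty hmax hm hn hk1 hkr
    exact ⟨p.2.1, p.1, by rw [← hpk]; exact hp⟩
  set A : ℕ → ℕ := fun k => sSup (Row k) with hA
  set B : ℕ → ℕ := fun k => sInf (Row k) with hB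
  set C : ℕ → ℕ := fun k => sInf (Col k) with hC
  set D : ℕ → ℕ := fun k => sSup (Col k) with hD
  -- bounds for members
  have hbnd : ∀ p ∈ F, B p.2.2 ≤ p.1 ∧ p.1 ≤ A p.2.2 ∧ C p.2.2 ≤ p.2.1 ∧ p.2.1 ≤ D p.2.2 := by
    intro p hp
    have hrm : p.1 ∈ Row p.2.2 := ⟨p.2.1, hp⟩
    have hcm : p.2.1 ∈ Col p.2.2 := ⟨p.1, hp⟩
    exact ⟨Nat.sInf_le hrm, le_csSup (hRowB _) hrm, Nat.sInf_le hcm, le_csSup (hColB _) hcm⟩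
  -- witnesses
  have hAw : ∀ k, 1 ≤ k → k ≤ r → ∃ j, (A k, j, k) ∈ F := by
    intro k hk1 hkr; exact Nat.sSup_mem (hRowNE k hk1 hkr) (hRowB k)
  have hBw : ∀ k, 1 ≤ k → k ≤ r → ∃ j, (B k, j, k) ∈ F := by
    intro k hk1 hkr; exact Nat.sInf_mem (hRowNE k hk1 hkr)
  have hCw : ∀ k, 1 ≤ k → k ≤ r → ∃ i, (i, C k, k) ∈ F := by
    intro k hk1 hkr; exact Nat.sInf_mem (hColNE k hk1 hkr)
  have hDw : ∀ k, 1 ≤ k → k ≤ r → ∃ i, (i, D k, k) ∈ F := by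
    intro k hk1 hkr; exact Nat.sSup_mem (hColNE k hk1 hkr) (hColB k)
  -- the top-left corner (max row, min col) of each layer is in F
  have hTL : ∀ k, 1 ≤ k → k ≤ r → (A k, C k, k) ∈ F := by
    intro k hk1 hkr
    obtain ⟨jA, hjA⟩ := hAw k hk1 hkr
    obtain ⟨iC, hiC⟩ := hCw k hk1 hkr
    refine insert_mem hmax ?_ ?_
    · exact ⟨(hF hjA).1, (hF hjA).2.1, (hF hiC).2.2.1, (hF hiC).2.2.2.1, hk1, hkr⟩
    · intro p hp
      refine compat_of p _ _ _ ?_ ?_ ?_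
      · intro hpk
        have hpk' : p.2.2 = k := hpk
        have h := hbnd p hp
        rw [hpk'] at h
        omega
      · intro hpk
        have hpk' : p.2.2 < k := hpk
        exact ⟨(cross hdf hp hjA hpk').1, (cross hdf hp hiC hpk').2⟩
      · intro hpk
        have hpk' : k < p.2.2 := hpk
        exact ⟨(cross hdf hjA hp hpk').1, (cross hdf hiC hp hpk').2⟩
  -- the bottom-right corner (min row, max col) of each layer is in F
  have hBR : ∀ k, 1 ≤ k → k ≤ r → (B k, D k, k) ∈ F := by
    intro k hk1 hkr
    obtain ⟨jB, hjB⟩ := hBw k hk1 hkr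
    obtain ⟨iD, hiD⟩ := hDw k hk1 hkr
    refine insert_mem hmax ?_ ?_
    · exact ⟨(hF hjB).1, (hF hjB).2.1, (hF hiD).2.2.1, (hF hiD).2.2.2.1, hk1, hkr⟩
    · intro p hp
      refine compat_of p _ _ _ ?_ ?_ ?_
      · intro hpk
        have hpk' : p.2.2 = k := hpk
        have h := hbnd p hp
        rw [hpk'] at h
        omega
      · intro hpk
        have hpk' : p.2.2 < k := hpk
        exact ⟨(cross hdf hp hjB hpk').1, (cross hdf hp hiD hpk').2⟩
      · intro hpk
        have hpk' : k < p.2.2 := hpk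
        exact ⟨(cross hdf hjB hp hpk').1, (cross hdf hiD hp hpk').2⟩
  -- boundary conditions
  have hA1 : A 1 = m := by
    have hmem : (m, C 1, 1) ∈ F := by
      refine insert_mem hmax ⟨hm, le_refl m, (hF (hTL 1 le_rfl hr)).2.2.1,
        (hF (hTL 1 le_rfl hr)).2.2.2.1, le_rfl, hr⟩ ?_
      intro p hp
      refine compat_of p _ _ _ ?_ ?_ ?_
      · intro hpk
        have hpk' : p.2.2 = 1 := hpk
        have h := hbnd p hp
        rw [hpk'] at h
        have h2 := (hF hp).2.1
        omega
      · intro hpk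
        have hpk' : p.2.2 < 1 := hpk
        exact absurd (hF hp).2.2.2.2.1 (by omega)
      · intro hpk
        have hpk' : 1 < p.2.2 := hpk
        exact ⟨(hF hp).2.1, (cross hdf (hTL 1 le_rfl hr) hp hpk').2⟩
    exact le_antisymm (by
      obtain ⟨jA, hjA⟩ := hAw 1 le_rfl hr
      exact (hF hjA).2.1) (le_csSup (hRowB 1) ⟨C 1, hmem⟩)
  have hD1 : D 1 = n := by
    have hmem : (B 1, n, 1) ∈ F := by
      refine insert_mem hmax ⟨(hF (hBR 1 le_rfl hr)).1, (hF (hBR 1 le_rfl hr)).2.1,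
        hn, le_rfl, le_rfl, hr⟩ ?_
      intro p hp
      refine compat_of p _ _ _ ?_ ?_ ?_
      · intro hpk
        have hpk' : p.2.2 = 1 := hpk
        have h := hbnd p hp
        rw [hpk'] at h
        have h2 := (hF hp).2.2.2.1
        omega
      · intro hpk
        have hpk' : p.2.2 < 1 := hpk
        exact absurd (hF hp).2.2.2.2.1 (by omega)
      · intro hpk
        have hpk' : 1 < p.2.2 := hpk
        exact ⟨(cross hdf (hBR 1 le_rfl hr) hp hpk').1, (hF hp).2.2.2.1⟩
    exact le_antisymm (by
      obtain ⟨iD, hiD⟩ := hDw 1 le_rfl hr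
      exact (hF hiD).2.2.2.1) (le_csSup (hColB 1) ⟨B 1, hmem⟩)
  have hBr : B r = 1 := by
    have hmem : (1, D r, r) ∈ F := by
      refine insert_mem hmax ⟨le_rfl, hm, (hF (hBR r hr le_rfl)).2.2.1,
        (hF (hBR r hr le_rfl)).2.2.2.1, hr, le_rfl⟩ ?_
      intro p hp
      refine compat_of p _ _ _ ?_ ?_ ?_
      · intro hpk
        have hpk' : p.2.2 = r := hpk
        have h := hbnd p hp
        rw [hpk'] at h
        have h2 := (hF hp).1
        omega
      · intro hpk
        have hpk' : p.2.2 < r := hpk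
        exact ⟨(hF hp).1, (cross hdf hp (hBR r hr le_rfl) hpk').2⟩
      · intro hpk
        have hpk' : r < p.2.2 := hpk
        exact absurd (hF hp).2.2.2.2.2 (by omega)
    refine le_antisymm (Nat.sInf_le ⟨D r, hmem⟩) ?_
    obtain ⟨jB, hjB⟩ := hBw r hr le_rfl
    exact (hF hjB).1
  have hCr : C r = 1 := by
    have hmem : (A r, 1, r) ∈ F := by
      refine insert_mem hmax ⟨(hF (hTL r hr le_rfl)).1, (hF (hTL r hr le_rfl)).2.1,
        le_rfl, hn, hr, le_rfl⟩ ?_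
      intro p hp
      refine compat_of p _ _ _ ?_ ?_ ?_
      · intro hpk
        have hpk' : p.2.2 = r := hpk
        have h := hbnd p hp
        rw [hpk'] at h
        have h2 := (hF hp).2.2.1
        omega
      · intro hpk
        have hpk' : p.2.2 < r := hpk
        exact ⟨(cross hdf hp (hTL r hr le_rfl) hpk').1, (hF hp).2.2.1⟩
      · intro hpk
        have hpk' : r < p.2.2 := hpk
        exact absurd (hF hp).2.2.2.2.2 (by omega)
    refine le_antisymm (Nat.sInf_le ⟨A r, hmem⟩) ?_
    obtain ⟨iC, hiC⟩ := hCw r hr le_rfl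
    exact (hF hiC).2.2.1
  -- the joins between consecutive layers
  have hABle : ∀ k, 1 ≤ k → k < r → A (k + 1) ≤ B k :=
    fun k hk1 hkr => (cross hdf (hBR k hk1 (le_of_lt hkr))
      (hTL (k + 1) (by omega) hkr) (show k < k + 1 from Nat.lt_succ_self k)).1
  have hDCle : ∀ k, 1 ≤ k → k < r → D (k + 1) ≤ C k :=
    fun k hk1 hkr => (cross hdf (hTL k hk1 (le_of_lt hkr))
      (hBR (k + 1) (by omega) hkr) (show k < k + 1 from Nat.lt_succ_self k)).2
  have hJoinRow : ∀ k, 1 ≤ k → k < r → A (k + 1) = B k := by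
    intro k hk1 hkr
    have hmem : (B k, C (k + 1), k + 1) ∈ F := by
      refine insert_mem hmax ⟨(hF (hBR k hk1 (le_of_lt hkr))).1,
        (hF (hBR k hk1 (le_of_lt hkr))).2.1, (hF (hTL (k+1) (by omega) hkr)).2.2.1,
        (hF (hTL (k+1) (by omega) hkr)).2.2.2.1, Nat.succ_le_succ (Nat.zero_le k), hkr⟩ ?_
      intro p hp
      refine compat_of p _ _ _ ?_ ?_ ?_
      · intro hpk
        have hpk' : p.2.2 = k + 1 := hpk
        have h := hbnd p hp
        rw [hpk'] at h
        have h2 := hABle k hk1 hkr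
        omega
      · intro hpk
        have hpk' : p.2.2 < k + 1 := hpk
        constructor
        · rcases eq_or_lt_of_le (Nat.lt_succ_iff.mp hpk') with he | hlt
          · have h := (hbnd p hp).1
            rw [he] at h
            exact h
          · exact (cross hdf hp (hBR k hk1 (le_of_lt hkr)) hlt).1
        · exact (cross hdf hp (hTL (k+1) (by omega) hkr) hpk').2
      · intro hpk
        have hpk' : k + 1 < p.2.2 := hpk
        constructor
        · exact le_trans (cross hdf (hTL (k+1) (by omega) hkr) hp hpk').1 (hABle k hk1 hkr)
        · exact (cross hdf (hTL (k+1) (by omega) hkr) hp hpk').2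
    exact le_antisymm (hABle k hk1 hkr) (le_csSup (hRowB (k+1)) ⟨C (k+1), hmem⟩)
  have hJoinCol : ∀ k, 1 ≤ k → k < r → D (k + 1) = C k := by
    intro k hk1 hkr
    have hmem : (A k, D (k + 1), k) ∈ F := by
      refine insert_mem hmax ⟨(hF (hTL k hk1 (le_of_lt hkr))).1,
        (hF (hTL k hk1 (le_of_lt hkr))).2.1, (hF (hBR (k+1) (by omega) hkr)).2.2.1,
        (hF (hBR (k+1) (by omega) hkr)).2.2.2.1, hk1, le_of_lt hkr⟩ ?_
      intro p hp
      refine compat_of p _ _ _ ?_ ?_ ?_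
      · intro hpk
        have hpk' : p.2.2 = k := hpk
        have h := hbnd p hp
        rw [hpk'] at h
        have h2 := hDCle k hk1 hkr
        omega
      · intro hpk
        have hpk' : p.2.2 < k := hpk
        exact ⟨(cross hdf hp (hTL k hk1 (le_of_lt hkr)) hpk').1,
          (cross hdf hp (hBR (k+1) (by omega) hkr) (show p.2.2 < k + 1 by omega)).2⟩
      · intro hpk
        have hpk' : k < p.2.2 := hpk
        constructor
        · exact (cross hdf (hTL k hk1 (le_of_lt hkr)) hp hpk').1
        · rcases eq_or_lt_of_le (Nat.succ_le_of_lt hpk') with he | hlt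
          · have h := (hbnd p hp).2.2.2
            rw [← he] at h
            exact h
          · exact (cross hdf (hBR (k+1) (by omega) hkr) hp hlt).2
    exact le_antisymm (hDCle k hk1 hkr) (Nat.sInf_le ⟨A k, hmem⟩)
  -- rank order within a layer
  have hOrd : ∀ k, ∀ p ∈ F, ∀ q ∈ F, p.2.2 = k → q.2.2 = k →
      (A k - p.1) + (p.2.1 - C k) ≤ (A k - q.1) + (q.2.1 - C k) →
      q.1 ≤ p.1 ∧ p.2.1 ≤ q.2.1 := by
    intro k p hp q hq hpk hqk hle
    have h1 := anti hdf hp hq (hpk.trans hqk.symm)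
    have h2 := anti hdf hq hp (hqk.trans hpk.symm)
    have hb1 := hbnd p hp
    have hb2 := hbnd q hq
    rw [hpk] at hb1
    rw [hqk] at hb2
    omega
  -- saturation: every rank value in [0, T k] is attained in layer k
  have hSat : ∀ k, 1 ≤ k → k ≤ r → ∀ v, v ≤ (A k - B k) + (D k - C k) →
      ∃ p ∈ F, p.2.2 = k ∧ (A k - p.1) + (p.2.1 - C k) = v := by
    intro k hk1 hkr v hv
    by_contra hno
    push_neg at hno
    have hTLm := hTL k hk1 hkr
    have hBRm := hBR k hk1 hkr
    have hBA : B k ≤ A k := (hbnd _ hTLm).1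
    have hCD : C k ≤ D k := (hbnd _ hBRm).2.2.1
    rcases Nat.eq_zero_or_pos v with rfl | hvpos
    · exact hno _ hTLm rfl (show (A k - A k) + (C k - C k) = 0 by omega)
    rcases eq_or_lt_of_le hv with hveq | hvT
    · exact hno _ hBRm rfl hveq.symm
    set P : Set ℕ := {w | w < v ∧ ∃ p ∈ F, p.2.2 = k ∧ (A k - p.1) + (p.2.1 - C k) = w}
      with hPdef
    have hP0 : 0 ∈ P :=
      ⟨hvpos, (A k, C k, k), hTLm, rfl, show (A k - A k) + (C k - C k) = 0 by omega⟩
    have hPb : BddAbove P := ⟨v, fun w hw => le_of_lt hw.1⟩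
    have hPs := Nat.sSup_mem ⟨0, hP0⟩ hPb
    obtain ⟨hsv, p, hpF, hpk, hpr⟩ := hPs
    set Q : Set ℕ := {w | v < w ∧ ∃ q ∈ F, q.2.2 = k ∧ (A k - q.1) + (q.2.1 - C k) = w}
      with hQdef
    have hQT : (A k - B k) + (D k - C k) ∈ Q := ⟨hvT, (B k, D k, k), hBRm, rfl, rfl⟩
    have hQs := Nat.sInf_mem (⟨_, hQT⟩ : Q.Nonempty)
    obtain ⟨hvq, q, hqF, hqk, hqr⟩ := hQs
    have hpq := hOrd k p hpF q hqF hpk hqk (by omega)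
    have hbp := hbnd p hpF
    have hbq := hbnd q hqF
    rw [hpk] at hbp
    rw [hqk] at hbq
    have hgap : ∀ w ∈ F, w.2.2 = k →
        (A k - w.1) + (w.2.1 - C k) ≤ sSup P ∨ sInf Q ≤ (A k - w.1) + (w.2.1 - C k) := by
      intro w hw hwk
      rcases lt_trichotomy ((A k - w.1) + (w.2.1 - C k)) v with hlt | heq | hgt
      · exact Or.inl (le_csSup hPb ⟨hlt, w, hw, hwk, rfl⟩)
      · exact absurd heq (hno w hw hwk)
      · exact Or.inr (Nat.sInf_le ⟨hgt, w, hw, hwk, rfl⟩)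
    obtain ⟨x1, x2, hx1q, hx1p, hx2p, hx2q, hxr⟩ :
        ∃ x1 x2, q.1 ≤ x1 ∧ x1 ≤ p.1 ∧ p.2.1 ≤ x2 ∧ x2 ≤ q.2.1 ∧
          (A k - x1) + (x2 - C k) = v := by
      rcases le_or_gt (v - sSup P) (p.1 - q.1) with hc | hc
      · exact ⟨p.1 - (v - sSup P), p.2.1, by omega, by omega, le_rfl, hpq.2, by omega⟩
      · exact ⟨q.1, p.2.1 + ((v - sSup P) - (p.1 - q.1)), le_rfl, hpq.1, by omega,
          by omega, by omega⟩
    have hxg : (x1, x2, k) ∈ gridP m n r := by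
      obtain ⟨a1, a2, a3, a4, -, -⟩ := hF hqF
      obtain ⟨b1, b2, b3, b4, -, -⟩ := hF hpF
      exact ⟨show 1 ≤ x1 by omega, show x1 ≤ m by omega, show 1 ≤ x2 by omega,
        show x2 ≤ n by omega, hk1, hkr⟩
    have hxF : (x1, x2, k) ∈ F := by
      refine insert_mem hmax hxg ?_
      intro w hw
      refine compat_of w _ _ _ ?_ ?_ ?_
      · intro hwk
        have hwk' : w.2.2 = k := hwk
        rcases hgap w hw hwk' with hle | hge
        · have h := hOrd k w hw p hpF hwk' hpk (by omega)
          omega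
        · have h := hOrd k q hqF w hw hqk hwk' (by omega)
          omega
      · intro hwk
        have hwk' : w.2.2 < k := hwk
        have h1 : A k ≤ w.1 := (cross hdf hw hTLm hwk').1
        have h2 : D k ≤ w.2.1 := (cross hdf hw hBRm hwk').2
        omega
      · intro hwk
        have hwk' : k < w.2.2 := hwk
        have h1 : w.1 ≤ B k := (cross hdf hBRm hw hwk').1
        have h2 : w.2.1 ≤ C k := (cross hdf hTLm hw hwk').2
        omega
    exact hno _ hxF rfl hxr
  -- construction of the paths, layer by layer
  have hpath : ∀ K, 1 ≤ K → K ≤ r →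
      IsPath ((fun q : ℕ × ℕ => (q.1, (K - 1) * n + q.2)) '' {q | (q.1, q.2, K) ∈ F})
        (A K, (K - 1) * n + C K) (B K, (K - 1) * n + D K) := by
    intro K hK1 hKr
    set off := (K - 1) * n with hoff
    set T := (A K - B K) + (D K - C K) with hT
    have hch : ∀ s : ℕ, ∃ p, p ∈ F ∧ p.2.2 = K ∧
        (A K - p.1) + (p.2.1 - C K) = min s T := by
      intro s
      obtain ⟨p, hp, h2, h3⟩ := hSat K hK1 hKr (min s T) (min_le_right _ _)
      exact ⟨p, hp, h2, h3⟩
    choose pt hptF hptk hptr using hch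
    have hptb : ∀ s, B K ≤ (pt s).1 ∧ (pt s).1 ≤ A K ∧ C K ≤ (pt s).2.1 ∧ (pt s).2.1 ≤ D K := by
      intro s
      have hb := hbnd _ (hptF s)
      rw [hptk s] at hb
      exact hb
    have hBA : B K ≤ A K := (hbnd _ (hTL K hK1 hKr)).1
    have hCD : C K ≤ D K := (hbnd _ (hBR K hK1 hKr)).2.2.1
    refine ⟨T, fun s => ((pt s).1, off + (pt s).2.1), ?_, ?_, ?_, ?_⟩
    · have hb := hptb 0
      have h0 := hptr 0
      simp only [Prod.mk.injEq]
      constructor <;> omega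
    · have hb := hptb T
      have h0 := hptr T
      simp only [Prod.mk.injEq]
      constructor <;> omega
    · ext y
      simp only [Set.mem_image, Set.mem_setOf_eq, Set.mem_Iic]
      constructor
      · rintro ⟨q, hq, rfl⟩
        have hb : B K ≤ q.1 ∧ q.1 ≤ A K ∧ C K ≤ q.2 ∧ q.2 ≤ D K := hbnd _ hq
        set v := (A K - q.1) + (q.2 - C K) with hv
        have hvT : v ≤ T := by omega
        refine ⟨v, hvT, ?_⟩
        have hb2 := hptb v
        have hr2 := hptr v
        have ho1 : q.1 ≤ (pt v).1 ∧ (pt v).2.1 ≤ q.2 :=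
          hOrd K (pt v) (hptF v) (q.1, q.2, K) hq (hptk v) rfl
            (show (A K - (pt v).1) + ((pt v).2.1 - C K) ≤ (A K - q.1) + (q.2 - C K) by omega)
        have ho2 : (pt v).1 ≤ q.1 ∧ q.2 ≤ (pt v).2.1 :=
          hOrd K (q.1, q.2, K) hq (pt v) (hptF v) rfl (hptk v)
            (show (A K - q.1) + (q.2 - C K) ≤ (A K - (pt v).1) + ((pt v).2.1 - C K) by omega)
        simp only [Prod.mk.injEq]
        constructor <;> omega
      · rintro ⟨s, hs, rfl⟩
        refine ⟨((pt s).1, (pt s).2.1), ?_, rfl⟩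
        rw [← hptk s]
        exact hptF s
    · intro s hs
      have hr1 := hptr s
      have hr2 := hptr (s + 1)
      have hb1 := hptb s
      have hb2 := hptb (s + 1)
      have ho : (pt (s+1)).1 ≤ (pt s).1 ∧ (pt s).2.1 ≤ (pt (s+1)).2.1 :=
        hOrd K (pt s) (hptF s) (pt (s+1)) (hptF (s+1)) (hptk s) (hptk (s+1))
          (show (A K - (pt s).1) + ((pt s).2.1 - C K) ≤
            (A K - (pt (s+1)).1) + ((pt (s+1)).2.1 - C K) by omega)
      show ((pt (s+1)).1 + 1 = (pt s).1 ∧ off + (pt (s+1)).2.1 = off + (pt s).2.1) ∨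
        ((pt (s+1)).1 = (pt s).1 ∧ off + (pt (s+1)).2.1 = (off + (pt s).2.1) + 1)
      omega
  -- assemble the data
  set gg : ℕ → ℕ := fun k => if k = 0 then m else B k with hgg
  set hh : ℕ → ℕ := fun k => if k = 0 then n else C k with hhh
  set SS : ℕ → Set (ℕ × ℕ) :=
    fun k => (fun q : ℕ × ℕ => (q.1, (k - 1) * n + q.2)) '' {q | (q.1, q.2, k) ∈ F} with hSS
  have hgg0 : gg 0 = m := rfl
  have hhh0 : hh 0 = n := rfl
  have hggpos : ∀ k, 1 ≤ k → gg k = B k := by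
    intro k hk
    simp only [hgg]
    exact if_neg (by omega)
  have hhhpos : ∀ k, 1 ≤ k → hh k = C k := by
    intro k hk
    simp only [hhh]
    exact if_neg (by omega)
  refine ⟨gg, hh, hgg0, by rw [hggpos r hr]; exact hBr, hhh0,
    by rw [hhhpos r hr]; exact hCr, ?_, ?_, SS, ?_, ?_⟩
  · intro k hk
    rcases Nat.eq_zero_or_pos k with rfl | hk0
    · rw [hgg0, hggpos 1 le_rfl]
      have h1 : B 1 ≤ A 1 := (hbnd _ (hTL 1 le_rfl hr)).1
      omega
    · rw [hggpos k hk0, hggpos (k+1) (by omega)]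
      have h1 : B (k+1) ≤ A (k+1) := (hbnd _ (hTL (k+1) (by omega) (by omega))).1
      have h2 := hJoinRow k hk0 hk
      omega
  · intro k hk
    rcases Nat.eq_zero_or_pos k with rfl | hk0
    · rw [hhh0, hhhpos 1 le_rfl]
      have h1 : C 1 ≤ D 1 := (hbnd _ (hTL 1 le_rfl hr)).2.2.2
      omega
    · rw [hhhpos k hk0, hhhpos (k+1) (by omega)]
      have h1 : C (k+1) ≤ D (k+1) := (hbnd _ (hTL (k+1) (by omega) (by omega))).2.2.2
      have h2 := hJoinCol k hk0 hk
      omega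
  · intro k hk1 hkr
    obtain ⟨k', rfl⟩ : ∃ k', k = k' + 1 := ⟨k - 1, by omega⟩
    have e1 : gg (k' + 1 - 1) = A (k' + 1) := by
      simp only [Nat.add_sub_cancel]
      rcases Nat.eq_zero_or_pos k' with rfl | h0
      · rw [hgg0]; exact hA1.symm
      · rw [hggpos k' h0]; exact (hJoinRow k' h0 (by omega)).symm
    have e4 : hh (k' + 1 - 1) = D (k' + 1) := by
      simp only [Nat.add_sub_cancel]
      rcases Nat.eq_zero_or_pos k' with rfl | h0
      · rw [hhh0]; exact hD1.symm
      · rw [hhhpos k' h0]; exact (hJoinCol k' h0 (by omega)).symm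
    rw [e1, e4, hggpos (k'+1) hk1, hhhpos (k'+1) hk1]
    exact hpath (k'+1) hk1 hkr
  · ext y
    simp only [Set.mem_image, Set.mem_iUnion, Set.mem_Icc, Set.mem_setOf_eq, exists_prop,
      hSS]
    constructor
    · rintro ⟨p, hp, rfl⟩
      have hg := hF hp
      exact ⟨p.2.2, ⟨hg.2.2.2.2.1, hg.2.2.2.2.2⟩, (p.1, p.2.1), hp, rfl⟩
    · rintro ⟨k, hk, q, hq, rfl⟩
      exact ⟨(q.1, q.2, k), hq, rfl⟩

end Forward

lemma path_facts {S : Set (ℕ × ℕ)} {a b : ℕ × ℕ} (hp : IsPath S a b) :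
    a ∈ S ∧ b ∈ S ∧
    (∀ y ∈ S, b.1 ≤ y.1 ∧ y.1 ≤ a.1 ∧ a.2 ≤ y.2 ∧ y.2 ≤ b.2) ∧
    (∀ y ∈ S, ∀ z ∈ S, ¬(y.1 < z.1 ∧ y.2 < z.2)) ∧
    (∀ v ≤ (a.1 - b.1) + (b.2 - a.2), ∃ y ∈ S, (a.1 - y.1) + (y.2 - a.2) = v) := by
  obtain ⟨t, f, h0, ht, hSeq, hstep⟩ := hp
  have hmono : ∀ u v, u ≤ v → v ≤ t → (f v).1 ≤ (f u).1 ∧ (f u).2 ≤ (f v).2 := by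
    intro u v huv hvt
    induction v with
    | zero =>
      have : u = 0 := by omega
      subst this
      exact ⟨le_rfl, le_rfl⟩
    | succ v ih =>
      rcases Nat.eq_or_lt_of_le huv with rfl | hlt
      · exact ⟨le_rfl, le_rfl⟩
      · have h1 := ih (by omega) (by omega)
        have h2 := hstep v (by omega)
        omega
  have hinv : ∀ s, s ≤ t → (f s).2 + (f 0).1 = (f s).1 + (f 0).2 + s := by
    intro s
    induction s with
    | zero => intro _; omega
    | succ s ih =>
      intro hs
      have h1 := ih (by omega)
      have h2 := hstep s (by omega)
      omega
  subst hSeq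
  refine ⟨⟨0, Set.mem_Iic.mpr (Nat.zero_le t), h0⟩, ⟨t, Set.mem_Iic.mpr le_rfl, ht⟩, ?_, ?_, ?_⟩
  · rintro y ⟨s, hs, rfl⟩
    rw [Set.mem_Iic] at hs
    have h1 := hmono 0 s (Nat.zero_le s) hs
    have h2 := hmono s t hs le_rfl
    rw [h0] at h1
    rw [ht] at h2
    exact ⟨h2.1, h1.1, h1.2, h2.2⟩
  · rintro y ⟨u, hu, rfl⟩ z ⟨v, hv, rfl⟩
    rw [Set.mem_Iic] at hu hv
    rcases le_total u v with huv | hvu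
    · have h1 := hmono u v huv hv
      omega
    · have h1 := hmono v u hvu hu
      omega
  · intro v hv
    have hT := hinv t le_rfl
    have hb := hmono 0 t (Nat.zero_le t) le_rfl
    rw [h0] at hT hb
    rw [ht] at hT hb
    have hvt : v ≤ t := by omega
    refine ⟨f v, ⟨v, Set.mem_Iic.mpr hvt, rfl⟩, ?_⟩
    have h1 := hinv v hvt
    have h2 := hmono 0 v (Nat.zero_le v) hvt
    have h3 := hmono v t hvt le_rfl
    rw [h0] at h1 h2
    rw [ht] at h3
    omega

lemma block_inj {n : ℕ} {K k jj j : ℕ} (h1 : 1 ≤ jj) (h2 : jj ≤ n) (h3 : 1 ≤ j)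
    (h4 : j ≤ n) (hK : 1 ≤ K) (hk : 1 ≤ k)
    (he : (K - 1) * n + jj = (k - 1) * n + j) : K = k ∧ jj = j := by
  rcases lt_trichotomy K k with hlt | rfl | hgt
  · exfalso
    have h5 : K - 1 + 1 ≤ k - 1 := by omega
    have hmul : (K - 1) * n + n ≤ (k - 1) * n := by
      calc (K - 1) * n + n = (K - 1 + 1) * n := by ring
      _ ≤ (k - 1) * n := Nat.mul_le_mul_right n h5
    omega
  · exact ⟨rfl, by omega⟩
  · exfalso
    have h5 : k - 1 + 1 ≤ K - 1 := by omega
    have hmul : (k - 1) * n + n ≤ (K - 1) * n := by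
      calc (k - 1) * n + n = (k - 1 + 1) * n := by ring
      _ ≤ (K - 1) * n := Nat.mul_le_mul_right n h5
    omega

section Backward

variable {m n r : ℕ} {F : Set (ℕ × ℕ × ℕ)}

lemma backward (hm : 0 < m) (hn : 0 < n) (hr : 0 < r) (hF : F ⊆ gridP m n r)
    (g h : ℕ → ℕ) (hg0 : g 0 = m) (hgr : g r = 1) (hh0 : h 0 = n) (hhr : h r = 1)
    (hgmono : ∀ k < r, g (k + 1) ≤ g k) (hhmono : ∀ k < r, h (k + 1) ≤ h k)
    (S : ℕ → Set (ℕ × ℕ))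
    (hS : ∀ k, 1 ≤ k → k ≤ r →
      IsPath (S k) (g (k - 1), (k - 1) * n + h k) (g k, (k - 1) * n + h (k - 1)))
    (himg : flatten n '' F = ⋃ k ∈ Set.Icc 1 r, S k) :
    MaxDiagFree m n r F := by
  classical
  -- chain monotonicity and bounds
  have hgch : ∀ j k, j ≤ k → k ≤ r → g k ≤ g j := by
    intro j k hjk hkr
    induction k, hjk using Nat.le_induction with
    | base => exact le_rfl
    | succ k hk ih => exact le_trans (hgmono k (by omega)) (ih (by omega))
  have hhch : ∀ j k, j ≤ k → k ≤ r → h k ≤ h j := by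
    intro j k hjk hkr
    induction k, hjk using Nat.le_induction with
    | base => exact le_rfl
    | succ k hk ih => exact le_trans (hhmono k (by omega)) (ih (by omega))
  have hgb : ∀ k ≤ r, 1 ≤ g k ∧ g k ≤ m := by
    intro k hk
    constructor
    · rw [← hgr]; exact hgch k r hk le_rfl
    · rw [← hg0]; exact hgch 0 k (Nat.zero_le k) hk
  have hhb : ∀ k ≤ r, 1 ≤ h k ∧ h k ≤ n := by
    intro k hk
    constructor
    · rw [← hhr]; exact hhch k r hk le_rfl
    · rw [← hh0]; exact hhch 0 k (Nat.zero_le k) hk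
  -- path facts, instantiated
  have hSTa : ∀ k, 1 ≤ k → k ≤ r → ((g (k-1) : ℕ), (k-1) * n + h k) ∈ S k :=
    fun k hk1 hkr => (path_facts (hS k hk1 hkr)).1
  have hSTb : ∀ k, 1 ≤ k → k ≤ r → ((g k : ℕ), (k-1) * n + h (k-1)) ∈ S k :=
    fun k hk1 hkr => (path_facts (hS k hk1 hkr)).2.1
  have hBDS : ∀ k, 1 ≤ k → k ≤ r → ∀ y ∈ S k,
      g k ≤ y.1 ∧ y.1 ≤ g (k-1) ∧ (k-1) * n + h k ≤ y.2 ∧ y.2 ≤ (k-1) * n + h (k-1) :=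
    fun k hk1 hkr => (path_facts (hS k hk1 hkr)).2.2.1
  have hAnti : ∀ k, 1 ≤ k → k ≤ r → ∀ y ∈ S k, ∀ z ∈ S k, ¬(y.1 < z.1 ∧ y.2 < z.2) :=
    fun k hk1 hkr => (path_facts (hS k hk1 hkr)).2.2.2.1
  have hSurj : ∀ k, 1 ≤ k → k ≤ r → ∀ v,
      v ≤ (g (k-1) - g k) + (((k-1) * n + h (k-1)) - ((k-1) * n + h k)) →
      ∃ y ∈ S k, (g (k-1) - y.1) + (y.2 - ((k-1) * n + h k)) = v :=
    fun k hk1 hkr => (path_facts (hS k hk1 hkr)).2.2.2.2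
  -- every point of F flattens into its own layer
  have hflat : ∀ p ∈ F, flatten n p ∈ S p.2.2 := by
    intro p hp
    have hpg := hF hp
    have hmem : flatten n p ∈ ⋃ k ∈ Set.Icc 1 r, S k := by
      rw [← himg]; exact Set.mem_image_of_mem _ hp
    simp only [Set.mem_iUnion, Set.mem_Icc, exists_prop] at hmem
    obtain ⟨k, ⟨hk1, hkr⟩, hy⟩ := hmem
    have hb := hBDS k hk1 hkr _ hy
    have hcol : (flatten n p).2 = (p.2.2 - 1) * n + p.2.1 := rfl
    have hbk1 := hhb k hkr
    have hbk0 := hhb (k-1) (by omega)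
    have heq : k = p.2.2 ∧ ((k-1) * n + ((flatten n p).2 - (k-1) * n)) = (flatten n p).2 := by
      have hj := block_inj (show 1 ≤ p.2.1 from hpg.2.2.1) hpg.2.2.2.1
        (show (1:ℕ) ≤ (flatten n p).2 - (k-1)*n by omega)
        (show (flatten n p).2 - (k-1)*n ≤ n by omega)
        hpg.2.2.2.2.1 hk1
        (show (p.2.2 - 1) * n + p.2.1 = (k - 1) * n + ((flatten n p).2 - (k-1)*n) by omega)
      exact ⟨hj.1.symm, by omega⟩
    rw [← heq.1]
    exact hy
  -- the corner points of each layer belong to F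
  have hunflat : ∀ k, 1 ≤ k → k ≤ r → ∀ y ∈ S k,
      (y.1, y.2 - (k-1) * n, k) ∈ F ∧ (k-1) * n + (y.2 - (k-1) * n) = y.2 := by
    intro k hk1 hkr y hy
    have hmem : y ∈ flatten n '' F := by
      rw [himg]
      simp only [Set.mem_iUnion, Set.mem_Icc, exists_prop]
      exact ⟨k, ⟨hk1, hkr⟩, hy⟩
    obtain ⟨p, hp, hpe⟩ := hmem
    have hpg := hF hp
    have hb := hBDS k hk1 hkr _ hy
    have hbk1 := hhb k hkr
    have hbk0 := hhb (k-1) (by omega)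
    have hcol : (p.2.2 - 1) * n + p.2.1 = y.2 := congrArg Prod.snd hpe
    have hrow : p.1 = y.1 := congrArg Prod.fst hpe
    have hj := block_inj hpg.2.2.1 hpg.2.2.2.1
      (show (1:ℕ) ≤ y.2 - (k-1)*n by omega)
      (show y.2 - (k-1)*n ≤ n by omega)
      hpg.2.2.2.2.1 hk1
      (show (p.2.2 - 1) * n + p.2.1 = (k - 1) * n + (y.2 - (k-1)*n) by omega)
    have hpeq : p = (y.1, y.2 - (k-1) * n, k) := by
      have e2 : p.2 = (y.2 - (k-1) * n, k) := Prod.ext hj.2 hj.1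
      exact Prod.ext hrow e2
    refine ⟨by rw [← hpeq]; exact hp, by omega⟩
  -- F is diagonal-free
  have hface : DiagFree m n r F := by
    refine ⟨hF, ?_⟩
    intro p hp q hq hd
    have hpg := hF hp
    have hqg := hF hq
    obtain ⟨hpa, hpb, hpc, hpd, hpe', hpf⟩ := hF hp
    obtain ⟨hqa, hqb, hqc, hqd, hqe', hqf⟩ := hF hq
    have hyp := hflat p hp
    have hyq := hflat q hq
    have hbp := hBDS p.2.2 hpg.2.2.2.2.1 hpg.2.2.2.2.2 _ hyp
    have hbq := hBDS q.2.2 hqg.2.2.2.2.1 hqg.2.2.2.2.2 _ hyq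
    have hcp : (flatten n p).1 = p.1 := rfl
    have hcq : (flatten n q).1 = q.1 := rfl
    have hcp2 : (flatten n p).2 = (p.2.2 - 1) * n + p.2.1 := rfl
    have hcq2 : (flatten n q).2 = (q.2.2 - 1) * n + q.2.1 := rfl
    rcases hd with ⟨he, h1, h2⟩ | ⟨hlt, h1⟩ | ⟨hlt, h1⟩
    · have hanti := hAnti p.2.2 hpg.2.2.2.2.1 hpg.2.2.2.2.2 _ hyp (flatten n q) (by rw [he]; exact hyq)
      refine hanti ⟨by omega, ?_⟩
      rw [hcp2, hcq2, ← he]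
      exact Nat.add_lt_add_left h2 _
    · -- row comparison across layers
      have hch := hgch p.2.2 (q.2.2 - 1) (by omega) (by omega)
      omega
    · -- column comparison across layers
      have hch := hhch p.2.2 (q.2.2 - 1) (by omega) (by omega)
      have hn1 : (q.2.2 - 1) * n + (h (q.2.2 - 1)) ≥ (q.2.2 - 1) * n + q.2.1 → h (q.2.2 - 1) ≥ q.2.1 := by omega
      have hq1 : q.2.1 ≤ h (q.2.2 - 1) := by omega
      have hp1 : h p.2.2 ≤ p.2.1 := by omega
      omega
  refine ⟨hface, ?_⟩
  intro G hG hFG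
  refine Set.Subset.antisymm ?_ hFG
  intro x hxG
  have hxg := hG.1 hxG
  set k := x.2.2 with hk
  have hk1 : 1 ≤ k := hxg.2.2.2.2.1
  have hkr : k ≤ r := hxg.2.2.2.2.2
  -- corner points of the layers, as members of F
  have hstart : ∀ K, 1 ≤ K → K ≤ r → ((g (K-1) : ℕ), h K, K) ∈ F := by
    intro K hK1 hKr
    have hu := hunflat K hK1 hKr _ (hSTa K hK1 hKr)
    have hb := hhb K hKr
    have : ((K:ℕ)-1) * n + h K - (K-1) * n = h K := by omega
    rw [this] at hu
    exact hu.1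
  have hend : ∀ K, 1 ≤ K → K ≤ r → ((g K : ℕ), h (K-1), K) ∈ F := by
    intro K hK1 hKr
    have hu := hunflat K hK1 hKr _ (hSTb K hK1 hKr)
    have hb := hhb (K-1) (by omega)
    have : ((K:ℕ)-1) * n + h (K-1) - (K-1) * n = h (K-1) := by omega
    rw [this] at hu
    exact hu.1
  -- bounds on x forced by G being diagonal-free
  have hxu : x.1 ≤ g (k-1) ∧ x.2.1 ≤ h (k-1) := by
    rcases Nat.eq_or_lt_of_le hk1 with he | h2k
    · constructor
      · rw [← he, hg0]; exact hxg.2.1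
      · rw [← he, hh0]; exact hxg.2.2.2.1
    · have hm1 := hend (k-1) (by omega) (by omega)
      have hm2 := hstart (k-1) (by omega) (by omega)
      have hc1 : x.1 ≤ (g (k-1), h (k-1-1), k-1).1 :=
        (cross hG (hFG hm1) hxG (show ((g (k-1) : ℕ), h (k-1-1), k-1).2.2 < x.2.2 by
          show k - 1 < k; omega)).1
      have hc2 : x.2.1 ≤ (g (k-1-1), h (k-1), k-1).2.1 :=
        (cross hG (hFG hm2) hxG (show ((g (k-1-1) : ℕ), h (k-1), k-1).2.2 < x.2.2 by
          show k - 1 < k; omega)).2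
      exact ⟨hc1, hc2⟩
  have hxl : g k ≤ x.1 ∧ h k ≤ x.2.1 := by
    rcases Nat.eq_or_lt_of_le hkr with he | hkl
    · constructor
      · rw [he, hgr]; exact hxg.1
      · rw [he, hhr]; exact hxg.2.2.1
    · have hm1 := hstart (k+1) (by omega) (by omega)
      have hm2 := hend (k+1) (by omega) (by omega)
      have e1 : ((k:ℕ)+1) - 1 = k := by omega
      rw [e1] at hm1 hm2
      have hc1 : (g k : ℕ) ≤ x.1 :=
        (cross hG hxG (hFG hm1) (show x.2.2 < ((g k : ℕ), h (k+1), k+1).2.2 by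
          show k < k + 1; omega)).1
      have hc2 : (h k : ℕ) ≤ x.2.1 :=
        (cross hG hxG (hFG hm2) (show x.2.2 < ((g (k+1) : ℕ), h k, k+1).2.2 by
          show k < k + 1; omega)).2
      exact ⟨hc1, hc2⟩
  -- find the point of the path with the same rank
  obtain ⟨y, hy, hyr⟩ := hSurj k hk1 hkr ((g (k-1) - x.1) + (x.2.1 - h k)) (by
    have h1 := hxu
    have h2 := hxl
    omega)
  have hw := hunflat k hk1 hkr y hy
  have hby := hBDS k hk1 hkr y hy
  have hbk1 := hhb k hkr
  have hbk0 := hhb (k-1) (by omega)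
  set w : ℕ × ℕ × ℕ := (y.1, y.2 - (k-1) * n, k) with hwdef
  have hwF : w ∈ F := hw.1
  have hwG : w ∈ G := hFG hwF
  have ha1 := anti hG hxG hwG (show x.2.2 = w.2.2 from rfl)
  have ha2 := anti hG hwG hxG (show w.2.2 = x.2.2 from rfl)
  have hw1 : w.1 = y.1 := rfl
  have hw2 : w.2.1 = y.2 - (k-1) * n := rfl
  have hx1 : x.1 = w.1 ∧ x.2.1 = w.2.1 := by
    rw [hw1, hw2]
    rw [hw1, hw2] at ha1 ha2
    omega
  have hxw : x = w := by
    have e2 : x.2 = w.2 := Prod.ext hx1.2 (show x.2.2 = w.2.2 from rfl)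
    exact Prod.ext hx1.1 e2
  rw [hxw]
  exact hwF

end Backward

end Stmt13Aux


theorem stmt_13 (m n r : ℕ) (hm : 0 < m) (hn : 0 < n) (hr : 0 < r)
    (F : Set (ℕ × ℕ × ℕ)) (hF : F ⊆ gridP m n r) :
    MaxDiagFree m n r F ↔
      ∃ g h : ℕ → ℕ,
        g 0 = m ∧ g r = 1 ∧ h 0 = n ∧ h r = 1 ∧
        (∀ k < r, g (k + 1) ≤ g k) ∧ (∀ k < r, h (k + 1) ≤ h k) ∧
        ∃ S : ℕ → Set (ℕ × ℕ),
          (∀ k, 1 ≤ k → k ≤ r →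
            IsPath (S k) (g (k - 1), (k - 1) * n + h k) (g k, (k - 1) * n + h (k - 1))) ∧
          flatten n '' F = ⋃ k ∈ Set.Icc 1 r, S k := by
  constructor
  · intro hmax
    exact Stmt13Aux.forward hm hn hr hmax
  · rintro ⟨g, h, hg0, hgr, hh0, hhr, hgm, hhm, S, hS, himg⟩
    exact Stmt13Aux.backward hm hn hr hF g h hg0 hgr hh0 hhr hgm hhm S hS himg
end

section
/- Every maximal diagonal-free subset of 𝒫 has exactly m + n + r − 2 elements (i.e., the complex of diagonal-free subsets is pure of dimension m+n+r−3). -/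
def ddLay (S : Finset (ℕ × ℕ × ℕ)) (k : ℕ) : Finset (ℕ × ℕ × ℕ) :=
  S.filter (fun p => p.2.2 = k)

def ddIMax (S : Finset (ℕ × ℕ × ℕ)) (k : ℕ) : ℕ := (ddLay S k).sup (fun p => p.1)
def ddJMax (S : Finset (ℕ × ℕ × ℕ)) (k : ℕ) : ℕ := (ddLay S k).sup (fun p => p.2.1)
noncomputable def ddIMin (S : Finset (ℕ × ℕ × ℕ)) (k : ℕ) : ℕ := sInf {i | ∃ p ∈ ddLay S k, p.1 = i}
noncomputable def ddJMin (S : Finset (ℕ × ℕ × ℕ)) (k : ℕ) : ℕ := sInf {j | ∃ p ∈ ddLay S k, p.2.1 = j}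

theorem facet_card (m n r : ℕ) (hm : 0 < m) (hn : 0 < n) (hr : 0 < r)
    (S : Finset (ℕ × ℕ × ℕ))
    (hgrid : ∀ p ∈ S, 1 ≤ p.1 ∧ p.1 ≤ m ∧ 1 ≤ p.2.1 ∧ p.2.1 ≤ n ∧ 1 ≤ p.2.2 ∧ p.2.2 ≤ r)
    (hcompat : ∀ p ∈ S, ∀ q ∈ S, ¬ DiagPair p q)
    (hmax : ∀ x : ℕ × ℕ × ℕ, (1 ≤ x.1 ∧ x.1 ≤ m ∧ 1 ≤ x.2.1 ∧ x.2.1 ≤ n ∧ 1 ≤ x.2.2 ∧ x.2.2 ≤ r) →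
      (∀ w ∈ S, ¬ DiagPair x w ∧ ¬ DiagPair w x) → x ∈ S) :
    S.card = m + n + r - 2 := by
  classical
  have memlay : ∀ (p : ℕ × ℕ × ℕ) (k : ℕ), p ∈ ddLay S k ↔ p ∈ S ∧ p.2.2 = k := by
    intro p k; simp [ddLay]
  -- cross-layer fact
  have cross : ∀ p ∈ S, ∀ q ∈ S, p.2.2 < q.2.2 → q.1 ≤ p.1 ∧ q.2.1 ≤ p.2.1 := by
    intro p hp q hq hk
    have := hcompat p hp q hq
    simp only [DiagPair] at this
    omega
  -- same-layer comparability
  have samek : ∀ p ∈ S, ∀ q ∈ S, p.2.2 = q.2.2 →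
      (p.1 ≤ q.1 ∧ q.2.1 ≤ p.2.1) ∨ (q.1 ≤ p.1 ∧ p.2.1 ≤ q.2.1) := by
    intro p hp q hq hk
    have h1 := hcompat p hp q hq
    have h2 := hcompat q hq p hp
    simp only [DiagPair] at h1 h2
    omega
  -- every layer is nonempty
  have hne : ∀ k, 1 ≤ k → k ≤ r → (ddLay S k).Nonempty := by
    intro k hk1 hk2
    by_contra hemp
    rw [Finset.not_nonempty_iff_eq_empty] at hemp
    set a := sInf ({m} ∪ {i | ∃ p ∈ S, p.2.2 < k ∧ p.1 = i}) with hadef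
    set b := sInf ({n} ∪ {j | ∃ p ∈ S, p.2.2 < k ∧ p.2.1 = j}) with hbdef
    have hamem : a ∈ ({m} ∪ {i | ∃ p ∈ S, p.2.2 < k ∧ p.1 = i}) :=
      Nat.sInf_mem ⟨m, Or.inl rfl⟩
    have hbmem : b ∈ ({n} ∪ {j | ∃ p ∈ S, p.2.2 < k ∧ p.2.1 = j}) :=
      Nat.sInf_mem ⟨n, Or.inl rfl⟩
    have ham : a ≤ m := Nat.sInf_le (Or.inl rfl)
    have hbn : b ≤ n := Nat.sInf_le (Or.inl rfl)
    have ha1 : 1 ≤ a := by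
      rcases hamem with h | ⟨p, hp, _, hpa⟩
      · simp only [Set.mem_singleton_iff] at h; omega
      · have := hgrid p hp; omega
    have hb1 : 1 ≤ b := by
      rcases hbmem with h | ⟨p, hp, _, hpb⟩
      · simp only [Set.mem_singleton_iff] at h; omega
      · have := hgrid p hp; omega
    -- a is ≤ every i in upper layers
    have haup : ∀ w ∈ S, w.2.2 < k → a ≤ w.1 := by
      intro w hw hwk; exact Nat.sInf_le (Or.inr ⟨w, hw, hwk, rfl⟩)
    have hbup : ∀ w ∈ S, w.2.2 < k → b ≤ w.2.1 := by
      intro w hw hwk; exact Nat.sInf_le (Or.inr ⟨w, hw, hwk, rfl⟩)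
    -- a is ≥ every i in lower layers
    have hadn : ∀ w ∈ S, k < w.2.2 → w.1 ≤ a := by
      intro w hw hwk
      rcases hamem with h | ⟨p, hp, hpk, hpa⟩
      · simp only [Set.mem_singleton_iff] at h; have := hgrid w hw; omega
      · have := (cross p hp w hw (by omega)).1; omega
    have hbdn : ∀ w ∈ S, k < w.2.2 → w.2.1 ≤ b := by
      intro w hw hwk
      rcases hbmem with h | ⟨p, hp, hpk, hpb⟩
      · simp only [Set.mem_singleton_iff] at h; have := hgrid w hw; omega
      · have := (cross p hp w hw (by omega)).2; omega
    have hxS : ((a, b, k) : ℕ × ℕ × ℕ) ∈ S := by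
      apply hmax
      · exact ⟨ha1, ham, hb1, hbn, hk1, hk2⟩
      · intro w hw
        have hwk : w.2.2 ≠ k := by
          intro h
          have : w ∈ ddLay S k := (memlay w k).mpr ⟨hw, h⟩
          rw [hemp] at this; exact absurd this (Finset.notMem_empty w)
        rcases lt_trichotomy w.2.2 k with h | h | h
        · have h1 := haup w hw h
          have h2 := hbup w hw h
          constructor <;> · simp only [DiagPair]; (try dsimp only); omega
        · exact absurd h hwk
        · have h1 := hadn w hw h
          have h2 := hbdn w hw h
          constructor <;> · simp only [DiagPair]; (try dsimp only); omega
    have : ((a,b,k) : ℕ × ℕ × ℕ) ∈ ddLay S k := (memlay _ k).mpr ⟨hxS, rfl⟩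
    rw [hemp] at this; exact absurd this (Finset.notMem_empty _)
  -- attainers and bounds
  have leIMax : ∀ k, ∀ p ∈ ddLay S k, p.1 ≤ ddIMax S k := fun k p hp => Finset.le_sup (f := fun q => q.1) hp
  have leJMax : ∀ k, ∀ p ∈ ddLay S k, p.2.1 ≤ ddJMax S k := fun k p hp => Finset.le_sup (f := fun q => q.2.1) hp
  have IMin_le : ∀ k, ∀ p ∈ ddLay S k, ddIMin S k ≤ p.1 :=
    fun k p hp => Nat.sInf_le ⟨p, hp, rfl⟩
  have JMin_le : ∀ k, ∀ p ∈ ddLay S k, ddJMin S k ≤ p.2.1 :=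
    fun k p hp => Nat.sInf_le ⟨p, hp, rfl⟩
  have attIMax : ∀ k, (ddLay S k).Nonempty → ∃ p ∈ ddLay S k, p.1 = ddIMax S k := by
    intro k h
    obtain ⟨p, hp, he⟩ := Finset.exists_mem_eq_sup (ddLay S k) h (fun p => p.1)
    exact ⟨p, hp, he.symm⟩
  have attJMax : ∀ k, (ddLay S k).Nonempty → ∃ p ∈ ddLay S k, p.2.1 = ddJMax S k := by
    intro k h
    obtain ⟨p, hp, he⟩ := Finset.exists_mem_eq_sup (ddLay S k) h (fun p => p.2.1)
    exact ⟨p, hp, he.symm⟩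
  have attIMin : ∀ k, (ddLay S k).Nonempty → ∃ p ∈ ddLay S k, p.1 = ddIMin S k := by
    intro k h
    obtain ⟨p, hp⟩ := h
    have hmem : ddIMin S k ∈ {i | ∃ p ∈ ddLay S k, p.1 = i} := Nat.sInf_mem ⟨p.1, p, hp, rfl⟩
    obtain ⟨q, hq, he⟩ := hmem
    exact ⟨q, hq, he⟩
  have attJMin : ∀ k, (ddLay S k).Nonempty → ∃ p ∈ ddLay S k, p.2.1 = ddJMin S k := by
    intro k h
    obtain ⟨p, hp⟩ := h
    have hmem : ddJMin S k ∈ {j | ∃ p ∈ ddLay S k, p.2.1 = j} := Nat.sInf_mem ⟨p.2.1, p, hp, rfl⟩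
    obtain ⟨q, hq, he⟩ := hmem
    exact ⟨q, hq, he⟩
  have bndI : ∀ k, 1 ≤ k → k ≤ r →
      1 ≤ ddIMin S k ∧ ddIMin S k ≤ ddIMax S k ∧ ddIMax S k ≤ m := by
    intro k h1 h2
    obtain ⟨p, hp, hpe⟩ := attIMin k (hne k h1 h2)
    obtain ⟨q, hq, hqe⟩ := attIMax k (hne k h1 h2)
    have hg := hgrid p ((memlay p k).mp hp).1
    have hg2 := hgrid q ((memlay q k).mp hq).1
    have := IMin_le k q hq
    omega
  have bndJ : ∀ k, 1 ≤ k → k ≤ r →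
      1 ≤ ddJMin S k ∧ ddJMin S k ≤ ddJMax S k ∧ ddJMax S k ≤ n := by
    intro k h1 h2
    obtain ⟨p, hp, hpe⟩ := attJMin k (hne k h1 h2)
    obtain ⟨q, hq, hqe⟩ := attJMax k (hne k h1 h2)
    have hg := hgrid p ((memlay p k).mp hp).1
    have hg2 := hgrid q ((memlay q k).mp hq).1
    have := JMin_le k q hq
    omega
  -- corners of a layer
  have cornerTop : ∀ k, (ddLay S k).Nonempty →
      ∃ p ∈ ddLay S k, p.1 = ddIMin S k ∧ p.2.1 = ddJMax S k := by
    intro k h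
    obtain ⟨pI, hpI, hI⟩ := attIMin k h
    obtain ⟨pJ, hpJ, hJ⟩ := attJMax k h
    obtain ⟨hpIS, hkI⟩ := (memlay pI k).mp hpI
    obtain ⟨hpJS, hkJ⟩ := (memlay pJ k).mp hpJ
    have hc := samek pI hpIS pJ hpJS (by omega)
    have h1 := leJMax k pI hpI
    have h2 := IMin_le k pJ hpJ
    rcases hc with ⟨hle, hge⟩ | ⟨hle, hge⟩
    · exact ⟨pI, hpI, hI, by omega⟩
    · exact ⟨pJ, hpJ, by omega, hJ⟩
  have cornerBot : ∀ k, (ddLay S k).Nonempty →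
      ∃ p ∈ ddLay S k, p.1 = ddIMax S k ∧ p.2.1 = ddJMin S k := by
    intro k h
    obtain ⟨pI, hpI, hI⟩ := attIMax k h
    obtain ⟨pJ, hpJ, hJ⟩ := attJMin k h
    obtain ⟨hpIS, hkI⟩ := (memlay pI k).mp hpI
    obtain ⟨hpJS, hkJ⟩ := (memlay pJ k).mp hpJ
    have hc := samek pI hpIS pJ hpJS (by omega)
    have h1 := leIMax k pJ hpJ
    have h2 := JMin_le k pI hpI
    rcases hc with ⟨hle, hge⟩ | ⟨hle, hge⟩
    · exact ⟨pJ, hpJ, by omega, hJ⟩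
    · exact ⟨pI, hpI, hI, by omega⟩
  -- tightness T1 : iMax at layer 1 is m
  have hT1 : ddIMax S 1 = m := by
    by_contra hne1
    have hb := bndI 1 le_rfl hr
    have hbj := bndJ 1 le_rfl hr
    obtain ⟨pJ, hpJ, hJ⟩ := attJMin 1 (hne 1 le_rfl hr)
    obtain ⟨hpJS, hkJ⟩ := (memlay pJ 1).mp hpJ
    have hxS : ((m, ddJMin S 1, 1) : ℕ × ℕ × ℕ) ∈ S := by
      refine hmax _ (by dsimp only; omega) ?_
      intro w hw
      have hgw := hgrid w hw
      rcases eq_or_lt_of_le (hgw.2.2.2.2.1) with h1 | h1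
      · -- w in layer 1
        have hwl : w ∈ ddLay S 1 := (memlay w 1).mpr ⟨hw, h1.symm⟩
        have f1 := leIMax 1 w hwl
        have f2 := JMin_le 1 w hwl
        constructor <;> · simp only [DiagPair]; omega
      · -- w in a lower layer
        have f1 := (cross pJ hpJS w hw (by omega)).2
        constructor <;> · simp only [DiagPair]; omega
    have : ((m, ddJMin S 1, 1) : ℕ × ℕ × ℕ) ∈ ddLay S 1 := (memlay _ 1).mpr ⟨hxS, rfl⟩
    have := leIMax 1 _ this
    simp only at this
    omega
  -- T2 : jMax at layer 1 is n
  have hT2 : ddJMax S 1 = n := by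
    by_contra hne1
    have hb := bndJ 1 le_rfl hr
    have hbi := bndI 1 le_rfl hr
    obtain ⟨pI, hpI, hI⟩ := attIMin 1 (hne 1 le_rfl hr)
    obtain ⟨hpIS, hkI⟩ := (memlay pI 1).mp hpI
    have hxS : ((ddIMin S 1, n, 1) : ℕ × ℕ × ℕ) ∈ S := by
      refine hmax _ (by dsimp only; omega) ?_
      intro w hw
      have hgw := hgrid w hw
      rcases eq_or_lt_of_le (hgw.2.2.2.2.1) with h1 | h1
      · have hwl : w ∈ ddLay S 1 := (memlay w 1).mpr ⟨hw, h1.symm⟩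
        have f1 := IMin_le 1 w hwl
        constructor <;> · simp only [DiagPair]; omega
      · have f1 := (cross pI hpIS w hw (by omega)).1
        constructor <;> · simp only [DiagPair]; omega
    have : ((ddIMin S 1, n, 1) : ℕ × ℕ × ℕ) ∈ ddLay S 1 := (memlay _ 1).mpr ⟨hxS, rfl⟩
    have := leJMax 1 _ this
    simp only at this
    omega
  -- T3 : iMin at layer r is 1
  have hT3 : ddIMin S r = 1 := by
    by_contra hne1
    have hb := bndI r hr le_rfl
    have hbj := bndJ r hr le_rfl
    obtain ⟨pJ, hpJ, hJ⟩ := attJMax r (hne r hr le_rfl)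
    obtain ⟨hpJS, hkJ⟩ := (memlay pJ r).mp hpJ
    have hxS : ((1, ddJMax S r, r) : ℕ × ℕ × ℕ) ∈ S := by
      refine hmax _ (by dsimp only; omega) ?_
      intro w hw
      have hgw := hgrid w hw
      rcases eq_or_lt_of_le (hgw.2.2.2.2.2) with h1 | h1
      · have hwl : w ∈ ddLay S r := (memlay w r).mpr ⟨hw, h1⟩
        have f1 := leJMax r w hwl
        have f2 := IMin_le r w hwl
        constructor <;> · simp only [DiagPair]; omega
      · have f1 := (cross w hw pJ hpJS (by omega)).2
        constructor <;> · simp only [DiagPair]; omega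
    have : ((1, ddJMax S r, r) : ℕ × ℕ × ℕ) ∈ ddLay S r := (memlay _ r).mpr ⟨hxS, rfl⟩
    have := IMin_le r _ this
    simp only at this
    omega
  -- T4 : jMin at layer r is 1
  have hT4 : ddJMin S r = 1 := by
    by_contra hne1
    have hb := bndJ r hr le_rfl
    have hbi := bndI r hr le_rfl
    obtain ⟨pI, hpI, hI⟩ := attIMax r (hne r hr le_rfl)
    obtain ⟨hpIS, hkI⟩ := (memlay pI r).mp hpI
    have hxS : ((ddIMax S r, 1, r) : ℕ × ℕ × ℕ) ∈ S := by
      refine hmax _ (by dsimp only; omega) ?_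
      intro w hw
      have hgw := hgrid w hw
      rcases eq_or_lt_of_le (hgw.2.2.2.2.2) with h1 | h1
      · have hwl : w ∈ ddLay S r := (memlay w r).mpr ⟨hw, h1⟩
        have f1 := leIMax r w hwl
        have f2 := JMin_le r w hwl
        constructor <;> · simp only [DiagPair]; omega
      · have f1 := (cross w hw pI hpIS (by omega)).1
        constructor <;> · simp only [DiagPair]; omega
    have : ((ddIMax S r, 1, r) : ℕ × ℕ × ℕ) ∈ ddLay S r := (memlay _ r).mpr ⟨hxS, rfl⟩
    have := JMin_le r _ this
    simp only at this
    omega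
  -- T5 : iMin of layer k equals iMax of layer k+1
  have hT5 : ∀ k, 1 ≤ k → k < r → ddIMin S k = ddIMax S (k+1) := by
    intro k hk1 hk2
    obtain ⟨pA, hpA, hA⟩ := attIMin k (hne k hk1 (by omega))
    obtain ⟨hpAS, hkA⟩ := (memlay pA k).mp hpA
    obtain ⟨pB, hpB, hB⟩ := attJMin (k+1) (hne (k+1) (by omega) (by omega))
    obtain ⟨hpBS, hkB⟩ := (memlay pB (k+1)).mp hpB
    obtain ⟨pC, hpC, hC⟩ := attIMax (k+1) (hne (k+1) (by omega) (by omega))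
    obtain ⟨hpCS, hkC⟩ := (memlay pC (k+1)).mp hpC
    -- iMax (k+1) ≤ iMin k
    have hle : ddIMax S (k+1) ≤ ddIMin S k := by
      have := (cross pA hpAS pC hpCS (by omega)).1
      omega
    by_contra hne1
    have hlt : ddIMax S (k+1) < ddIMin S k := by omega
    have hbI := bndI k hk1 (by omega)
    have hbI2 := bndI (k+1) (by omega) (by omega)
    have hbJ2 := bndJ (k+1) (by omega) (by omega)
    have hxS : ((ddIMin S k, ddJMin S (k+1), k+1) : ℕ × ℕ × ℕ) ∈ S := by
      refine hmax _ (by dsimp only; omega) ?_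
      intro w hw
      have hgw := hgrid w hw
      rcases lt_trichotomy w.2.2 (k+1) with h1 | h1 | h1
      · -- upper layer (≤ k)
        have f2 := (cross w hw pB hpBS (by omega)).2
        have f1 : ddIMin S k ≤ w.1 := by
          rcases eq_or_lt_of_le (Nat.lt_succ_iff.mp h1) with h2 | h2
          · exact IMin_le k w ((memlay w k).mpr ⟨hw, h2⟩)
          · have := (cross w hw pA hpAS (by omega)).1; omega
        constructor <;> · simp only [DiagPair]; omega
      · -- same layer k+1
        have hwl : w ∈ ddLay S (k+1) := (memlay w (k+1)).mpr ⟨hw, h1⟩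
        have f1 := leIMax (k+1) w hwl
        have f2 := JMin_le (k+1) w hwl
        constructor <;> · simp only [DiagPair]; omega
      · -- lower layer
        have f1 := (cross pB hpBS w hw (by omega)).1
        have f2 := (cross pB hpBS w hw (by omega)).2
        have f3 := leIMax (k+1) pB hpB
        constructor <;> · simp only [DiagPair]; omega
    have hin : ((ddIMin S k, ddJMin S (k+1), k+1) : ℕ × ℕ × ℕ) ∈ ddLay S (k+1) :=
      (memlay _ (k+1)).mpr ⟨hxS, rfl⟩
    have := leIMax (k+1) _ hin
    simp only at this
    omega
  -- T6 : jMin of layer k equals jMax of layer k+1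
  have hT6 : ∀ k, 1 ≤ k → k < r → ddJMin S k = ddJMax S (k+1) := by
    intro k hk1 hk2
    obtain ⟨pA, hpA, hA⟩ := attJMin k (hne k hk1 (by omega))
    obtain ⟨hpAS, hkA⟩ := (memlay pA k).mp hpA
    obtain ⟨pB, hpB, hB⟩ := attIMin (k+1) (hne (k+1) (by omega) (by omega))
    obtain ⟨hpBS, hkB⟩ := (memlay pB (k+1)).mp hpB
    obtain ⟨pC, hpC, hC⟩ := attJMax (k+1) (hne (k+1) (by omega) (by omega))
    obtain ⟨hpCS, hkC⟩ := (memlay pC (k+1)).mp hpC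
    have hle : ddJMax S (k+1) ≤ ddJMin S k := by
      have := (cross pA hpAS pC hpCS (by omega)).2
      omega
    by_contra hne1
    have hlt : ddJMax S (k+1) < ddJMin S k := by omega
    have hbJ := bndJ k hk1 (by omega)
    have hbJ2 := bndJ (k+1) (by omega) (by omega)
    have hbI2 := bndI (k+1) (by omega) (by omega)
    have hxS : ((ddIMin S (k+1), ddJMin S k, k+1) : ℕ × ℕ × ℕ) ∈ S := by
      refine hmax _ (by dsimp only; omega) ?_
      intro w hw
      have hgw := hgrid w hw
      rcases lt_trichotomy w.2.2 (k+1) with h1 | h1 | h1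
      · have f2 := (cross w hw pB hpBS (by omega)).1
        have f1 : ddJMin S k ≤ w.2.1 := by
          rcases eq_or_lt_of_le (Nat.lt_succ_iff.mp h1) with h2 | h2
          · exact JMin_le k w ((memlay w k).mpr ⟨hw, h2⟩)
          · have := (cross w hw pA hpAS (by omega)).2; omega
        constructor <;> · simp only [DiagPair]; omega
      · have hwl : w ∈ ddLay S (k+1) := (memlay w (k+1)).mpr ⟨hw, h1⟩
        have f1 := leJMax (k+1) w hwl
        have f2 := IMin_le (k+1) w hwl
        constructor <;> · simp only [DiagPair]; omega
      · have f1 := (cross pB hpBS w hw (by omega)).1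
        have f2 := (cross pB hpBS w hw (by omega)).2
        have f3 := leJMax (k+1) pB hpB
        constructor <;> · simp only [DiagPair]; omega
    have hin : ((ddIMin S (k+1), ddJMin S k, k+1) : ℕ × ℕ × ℕ) ∈ ddLay S (k+1) :=
      (memlay _ (k+1)).mpr ⟨hxS, rfl⟩
    have := leJMax (k+1) _ hin
    simp only at this
    omega
  -- cardinality of each layer
  have layercard : ∀ k, 1 ≤ k → k ≤ r →
      (ddLay S k).card = ddIMax S k + (ddJMax S k - ddJMin S k) + 1 - ddIMin S k := by
    intro k hk1 hk2
    have hbI := bndI k hk1 hk2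
    have hbJ := bndJ k hk1 hk2
    set φ : ℕ × ℕ × ℕ → ℕ := fun p => p.1 + (ddJMax S k - p.2.1) with hφ
    have hφval : ∀ p, φ p = p.1 + (ddJMax S k - p.2.1) := fun p => rfl
    have hinj : Set.InjOn φ (ddLay S k) := by
      intro p hp q hq he
      simp only [Finset.coe_filter, Finset.mem_coe] at hp hq
      have hp' : p ∈ ddLay S k := hp
      have hq' : q ∈ ddLay S k := hq
      obtain ⟨hpS, hpk⟩ := (memlay p k).mp hp'
      obtain ⟨hqS, hqk⟩ := (memlay q k).mp hq'
      have hc := samek p hpS q hqS (by omega)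
      have b1 := leJMax k p hp'
      have b2 := leJMax k q hq'
      rw [hφval, hφval] at he
      have hij : p.1 = q.1 ∧ p.2.1 = q.2.1 := by omega
      exact Prod.ext hij.1 (Prod.ext hij.2 (by omega))
    have himage : (ddLay S k).image φ =
        Finset.Icc (ddIMin S k) (ddIMax S k + (ddJMax S k - ddJMin S k)) := by
      apply Finset.Subset.antisymm
      · intro v hv
        obtain ⟨p, hp, he⟩ := Finset.mem_image.mp hv
        have b1 := leJMax k p hp
        have b2 := JMin_le k p hp
        have b3 := leIMax k p hp
        have b4 := IMin_le k p hp
        rw [Finset.mem_Icc]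
        rw [hφval] at he
        omega
      · intro v hv
        rw [Finset.mem_Icc] at hv
        by_contra hvnot
        have hvne : ∀ p ∈ ddLay S k, φ p ≠ v := by
          intro p hp he; exact hvnot (Finset.mem_image.mpr ⟨p, hp, he⟩)
        obtain ⟨ptop, hptop, htopI, htopJ⟩ := cornerTop k (hne k hk1 hk2)
        obtain ⟨pbot, hpbot, hbotI, hbotJ⟩ := cornerBot k (hne k hk1 hk2)
        have hφtop : φ ptop = ddIMin S k := by rw [hφval, htopI, htopJ]; omega
        have hφbot : φ pbot = ddIMax S k + (ddJMax S k - ddJMin S k) := by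
          rw [hφval, hbotI, hbotJ]
        set T := (ddLay S k).filter (fun p => φ p < v) with hTdef
        have hTne : T.Nonempty := by
          refine ⟨ptop, Finset.mem_filter.mpr ⟨hptop, ?_⟩⟩
          have := hvne ptop hptop; omega
        obtain ⟨p, hpT, hpmax⟩ := Finset.exists_max_image T φ hTne
        obtain ⟨hpl, hpv⟩ := Finset.mem_filter.mp hpT
        set Q := (ddLay S k).filter (fun p => v < φ p) with hQdef
        have hQne : Q.Nonempty := by
          refine ⟨pbot, Finset.mem_filter.mpr ⟨hpbot, ?_⟩⟩
          have := hvne pbot hpbot; omega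
        obtain ⟨q, hqQ, hqmin⟩ := Finset.exists_min_image Q φ hQne
        obtain ⟨hql, hqv⟩ := Finset.mem_filter.mp hqQ
        simp only [hφ] at hpv hqv
        obtain ⟨hpS, hpk⟩ := (memlay p k).mp hpl
        obtain ⟨hqS, hqk⟩ := (memlay q k).mp hql
        have hgp := hgrid p hpS
        have hgq := hgrid q hqS
        have bp1 := leJMax k p hpl
        have bq1 := leJMax k q hql
        have bq2 := JMin_le k q hql
        -- p is below-left of q on the staircase
        have hpq : p.1 ≤ q.1 ∧ q.2.1 ≤ p.2.1 := by
          rcases samek p hpS q hqS (by omega) with hbr | hbr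
          · exact hbr
          · exfalso; omega
        -- classification of all same-layer points
        have hsplit : ∀ w ∈ ddLay S k,
            (w.1 ≤ p.1 ∧ p.2.1 ≤ w.2.1) ∨ (q.1 ≤ w.1 ∧ w.2.1 ≤ q.2.1) := by
          intro w hwl
          obtain ⟨hwS, hwk⟩ := (memlay w k).mp hwl
          have hφw := hvne w hwl
          have bw := leJMax k w hwl
          rcases lt_or_gt_of_ne hφw with h | h
          · have hwT : w ∈ T := Finset.mem_filter.mpr ⟨hwl, h⟩
            have hle := hpmax w hwT
            rcases samek w hwS p hpS (by omega) with hbr | hbr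
            · exact Or.inl hbr
            · rw [hφval, hφval] at hle
              left; constructor <;> omega
          · have hwQ : w ∈ Q := Finset.mem_filter.mpr ⟨hwl, h⟩
            have hle := hqmin w hwQ
            rcases samek q hqS w hwS (by omega) with hbr | hbr
            · exact Or.inr hbr
            · rw [hφval, hφval] at hle
              right; constructor <;> omega
        -- facts about all points of S relative to p and q
        have wfacts : ∀ w ∈ S,
            (w.2.2 < k → (p.1 ≤ w.1 ∧ p.2.1 ≤ w.2.1) ∧ (q.1 ≤ w.1 ∧ q.2.1 ≤ w.2.1)) ∧
            (w.2.2 = k → (w.1 ≤ p.1 ∧ p.2.1 ≤ w.2.1) ∨ (q.1 ≤ w.1 ∧ w.2.1 ≤ q.2.1)) ∧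
            (k < w.2.2 → (w.1 ≤ p.1 ∧ w.2.1 ≤ p.2.1) ∧ (w.1 ≤ q.1 ∧ w.2.1 ≤ q.2.1)) := by
          intro w hw
          refine ⟨fun h => ⟨cross w hw p hpS (by omega), cross w hw q hqS (by omega)⟩,
            fun h => hsplit w ((memlay w k).mpr ⟨hw, h⟩),
            fun h => ⟨cross p hpS w hw (by omega), cross q hqS w hw (by omega)⟩⟩
        -- the gap
        have hgap : p.1 + (ddJMax S k - p.2.1) + 2 ≤ q.1 + (ddJMax S k - q.2.1) := by omega
        -- construct the new point x
        rcases eq_or_lt_of_le hpq.2 with hjc | hjc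
        · -- same column: q.2.1 = p.2.1, so q.1 ≥ p.1 + 2
          have hq2 : p.1 + 2 ≤ q.1 := by omega
          have hxS : ((p.1 + 1, p.2.1, k) : ℕ × ℕ × ℕ) ∈ S := by
            refine hmax _ (by dsimp only; omega) ?_
            intro w hw
            obtain ⟨f1, f2, f3⟩ := wfacts w hw
            constructor <;> · simp only [DiagPair]; omega
          have hxl : ((p.1 + 1, p.2.1, k) : ℕ × ℕ × ℕ) ∈ ddLay S k :=
            (memlay _ k).mpr ⟨hxS, rfl⟩
          have hxv := hvne _ hxl
          simp only [hφ] at hxv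
          have hxT : (p.1 + 1, p.2.1, k) ∈ T := by
            refine Finset.mem_filter.mpr ⟨hxl, ?_⟩
            simp only [hφ]
            omega
          have hfin := hpmax _ hxT
          simp only [hφ] at hfin
          omega
        · -- q.2.1 < p.2.1
          have hxS : ((p.1, p.2.1 - 1, k) : ℕ × ℕ × ℕ) ∈ S := by
            refine hmax _ (by dsimp only; omega) ?_
            intro w hw
            obtain ⟨f1, f2, f3⟩ := wfacts w hw
            constructor <;> · simp only [DiagPair]; omega
          have hxl : ((p.1, p.2.1 - 1, k) : ℕ × ℕ × ℕ) ∈ ddLay S k :=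
            (memlay _ k).mpr ⟨hxS, rfl⟩
          have hxv := hvne _ hxl
          simp only [hφ] at hxv
          have hxT : (p.1, p.2.1 - 1, k) ∈ T := by
            refine Finset.mem_filter.mpr ⟨hxl, ?_⟩
            simp only [hφ]
            omega
          have hfin := hpmax _ hxT
          simp only [hφ] at hfin
          omega
    calc (ddLay S k).card = ((ddLay S k).image φ).card :=
          (Finset.card_image_of_injOn hinj).symm
      _ = _ := by rw [himage, Nat.card_Icc]
  -- telescoping sum
  have key : ∀ t, 1 ≤ t → t ≤ r →
      (∑ k ∈ Finset.Icc 1 t, (ddLay S k).card) + ddIMin S t + ddJMin S t = m + n + t := by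
    intro t
    induction t with
    | zero => intro h1 h2; omega
    | succ t ih =>
      intro h1 h2
      rcases Nat.lt_or_ge 0 t with h0 | h0
      · have ht1 : 1 ≤ t := h0
        have ht2 : t ≤ r := by omega
        have ih' := ih ht1 ht2
        rw [Finset.sum_Icc_succ_top (by omega : 1 ≤ t + 1)]
        have lc := layercard (t+1) (by omega) h2
        have b1 := bndI (t+1) (by omega) h2
        have b1' := bndI t ht1 ht2
        have b2 := bndJ (t+1) (by omega) h2
        have b2' := bndJ t ht1 ht2
        have t5 := hT5 t ht1 (by omega)
        have t6 := hT6 t ht1 (by omega)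
        omega
      · have ht : t = 0 := by omega
        subst ht
        simp only [zero_add]
        rw [Finset.Icc_self, Finset.sum_singleton]
        have lc := layercard 1 le_rfl (by omega)
        have b1 := bndI 1 le_rfl (by omega)
        have b2 := bndJ 1 le_rfl (by omega)
        omega
  have hsum : S.card = ∑ k ∈ Finset.Icc 1 r, (ddLay S k).card :=
    Finset.card_eq_sum_card_fiberwise
      (by intro p hp; simp only [Finset.coe_Icc, Set.mem_Icc, Finset.mem_coe] at hp ⊢; have := hgrid p hp; omega)
  have hk := key r hr le_rfl
  omega

theorem stmt_14 (m n r : ℕ) (hm : 0 < m) (hn : 0 < n) (hr : 0 < r)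
    (F : Set (ℕ × ℕ × ℕ)) (hF : MaxDiagFree m n r F) :
    F.ncard = m + n + r - 2 := by
  obtain ⟨⟨hsub, hpair⟩, hmax⟩ := hF
  have hgfin : (gridP m n r).Finite := by
    apply Set.Finite.subset (Set.finite_Icc ((1:ℕ),(1:ℕ),(1:ℕ)) (m,n,r))
    intro p hp
    simp only [gridP, Set.mem_setOf_eq] at hp
    simp [Set.mem_Icc, Prod.le_def]
    omega
  have hfin : F.Finite := hgfin.subset hsub
  have hcard := facet_card m n r hm hn hr hfin.toFinset
    (by intro p hp; exact hsub (hfin.mem_toFinset.mp hp))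
    (by intro p hp q hq; exact hpair p (hfin.mem_toFinset.mp hp) q (hfin.mem_toFinset.mp hq))
    (by
      intro x hx hcomp
      rw [hfin.mem_toFinset]
      have hG : DiagFree m n r (F ∪ {x}) := by
        constructor
        · intro p hp
          rcases hp with hp | hp
          · exact hsub hp
          · rw [hp]; exact hx
        · intro p hp q hq
          have key : ∀ w ∈ F, ¬ DiagPair x w ∧ ¬ DiagPair w x := by
            intro w hw; exact hcomp w (hfin.mem_toFinset.mpr hw)
          have hxx : ¬ DiagPair x x := by simp [DiagPair]
          rcases hp with hp | hp <;> rcases hq with hq | hq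
          · exact hpair p hp q hq
          · rw [Set.mem_singleton_iff] at hq; subst hq; exact (key p hp).2
          · rw [Set.mem_singleton_iff] at hp; subst hp; exact (key q hq).1
          · rw [Set.mem_singleton_iff] at hp hq; subst hp; subst hq; exact hxx
      have := hmax _ hG Set.subset_union_left
      rw [← this]; exact Or.inr rfl)
  rw [Set.ncard_eq_toFinset_card _ hfin]
  exact hcard
end

section
/- The number of maximal diagonal-free subsets of 𝒫 equals (m+n+r−3)! / ((m−1)!·(n−1)!·(r−1)!), the number of words on the multiset {M^{m−1}, N^{n−1}, R^{r−1}}. -/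
namespace DblDet

/-- Combinatorial data describing a facet. -/
structure Data (m n r : ℕ) : Type where
  g : ℕ → ℕ
  h : ℕ → ℕ
  d : ℕ → ℕ → ℕ
  g0 : g 0 = m
  gr : ∀ k, r ≤ k → g k = 1
  gmono : ∀ k, g (k+1) ≤ g k
  h0 : h 0 = n
  hr : ∀ k, r ≤ k → h k = 1
  hmono : ∀ k, h (k+1) ≤ h k
  dmono : ∀ k i, d k (i+1) ≤ d k i
  dleft : ∀ k, 1 ≤ k → k ≤ r → ∀ i, i ≤ g k → d k i = h (k-1)
  dright : ∀ k, 1 ≤ k → k ≤ r → ∀ i, g (k-1) < i → d k i = h k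
  dout : ∀ k, (k = 0 ∨ r < k) → ∀ i, d k i = 1

namespace Data

variable {m n r : ℕ}

theorem ext' {D E : Data m n r} (hg : D.g = E.g) (hh : D.h = E.h) (hd : D.d = E.d) :
    D = E := by
  cases D; cases E; simp_all

theorem gant (D : Data m n r) : Antitone D.g := antitone_nat_of_succ_le D.gmono
theorem hant (D : Data m n r) : Antitone D.h := antitone_nat_of_succ_le D.hmono
theorem dant (D : Data m n r) (k : ℕ) : Antitone (D.d k) := antitone_nat_of_succ_le (D.dmono k)

theorem g_le (D : Data m n r) (k : ℕ) : D.g k ≤ m := le_trans (D.gant (Nat.zero_le k)) D.g0.le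
theorem h_le (D : Data m n r) (k : ℕ) : D.h k ≤ n := le_trans (D.hant (Nat.zero_le k)) D.h0.le
theorem g_pos (D : Data m n r) (k : ℕ) : 1 ≤ D.g k := by
  rcases le_or_gt r k with hk | hk
  · exact (D.gr k hk).ge
  · exact (D.gr r le_rfl) ▸ D.gant hk.le
theorem h_pos (D : Data m n r) (k : ℕ) : 1 ≤ D.h k := by
  rcases le_or_gt r k with hk | hk
  · exact (D.hr k hk).ge
  · exact (D.hr r le_rfl) ▸ D.hant hk.le

theorem d_le (D : Data m n r) {k : ℕ} (h1 : 1 ≤ k) (h2 : k ≤ r) (i : ℕ) :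
    D.d k i ≤ D.h (k-1) := by
  calc D.d k i ≤ D.d k 0 := D.dant k (Nat.zero_le i)
  _ = D.h (k-1) := D.dleft k h1 h2 0 (Nat.zero_le _)

theorem le_d (D : Data m n r) {k : ℕ} (h1 : 1 ≤ k) (h2 : k ≤ r) (i : ℕ) :
    D.h k ≤ D.d k i := by
  rcases le_or_gt i (D.g (k-1)) with hi | hi
  · calc D.h k = D.d k (D.g (k-1) + 1) := (D.dright k h1 h2 _ (Nat.lt_succ_self _)).symm
    _ ≤ D.d k i := D.dant k (by omega)
  · exact (D.dright k h1 h2 i hi).ge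

/-- The facet associated to the data. -/
theorem diagPair_mk {i j k i' j' k' : ℕ} :
    DiagPair (i, j, k) (i', j', k') ↔
      ((k = k' ∧ i < i' ∧ j < j') ∨ (k < k' ∧ i < i') ∨ (k < k' ∧ j < j')) := Iff.rfl

theorem gridP_mk {m n r i j k : ℕ} :
    (i, j, k) ∈ gridP m n r ↔ (1 ≤ i ∧ i ≤ m ∧ 1 ≤ j ∧ j ≤ n ∧ 1 ≤ k ∧ k ≤ r) := Iff.rfl

def facet (D : Data m n r) : Set (ℕ × ℕ × ℕ) :=
  {p | 1 ≤ p.2.2 ∧ p.2.2 ≤ r ∧ D.g p.2.2 ≤ p.1 ∧ p.1 ≤ D.g (p.2.2 - 1) ∧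
    D.d p.2.2 (p.1 + 1) ≤ p.2.1 ∧ p.2.1 ≤ D.d p.2.2 p.1}

theorem facet_mem {D : Data m n r} {i j k : ℕ} :
    (i, j, k) ∈ D.facet ↔ (1 ≤ k ∧ k ≤ r ∧ D.g k ≤ i ∧ i ≤ D.g (k - 1) ∧
      D.d k (i + 1) ≤ j ∧ j ≤ D.d k i) := Iff.rfl

theorem facet_subset (D : Data m n r) : D.facet ⊆ gridP m n r := by
  rintro ⟨i, j, k⟩ hp
  obtain ⟨hk1, hkr, h1, h2, h3, h4⟩ := facet_mem.mp hp
  exact gridP_mk.mpr ⟨le_trans (D.g_pos k) h1, le_trans h2 (D.g_le _),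
    le_trans (D.h_pos k) (le_trans (D.le_d hk1 hkr _) h3),
    le_trans h4 (le_trans (D.d_le hk1 hkr _) (D.h_le _)), hk1, hkr⟩

theorem facet_diagFree (D : Data m n r) : DiagFree m n r D.facet := by
  refine ⟨D.facet_subset, ?_⟩
  rintro ⟨i, j, k⟩ hp ⟨i', j', k'⟩ hq hpair
  obtain ⟨hk1, hkr, hgi, hig, hdj, hjd⟩ := facet_mem.mp hp
  obtain ⟨hk1', hkr', hgi', hig', hdj', hjd'⟩ := facet_mem.mp hq
  rcases diagPair_mk.mp hpair with ⟨hkk, hii, hjj⟩ | ⟨hkk, hii⟩ | ⟨hkk, hjj⟩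
  · -- same layer
    subst hkk
    have : j' ≤ j := le_trans hjd' (le_trans (D.dant k (by omega)) hdj)
    omega
  · -- k < k', i < i'
    have : i' ≤ D.g k := le_trans hig' (D.gant (by omega))
    omega
  · -- k < k', j < j'
    have h1 : j' ≤ D.h (k' - 1) := le_trans hjd' (D.d_le hk1' hkr' _)
    have h2 : D.h (k' - 1) ≤ D.h k := D.hant (by omega)
    have h3 : D.h k ≤ j := le_trans (D.le_d hk1 hkr _) hdj
    omega

end Data
end DblDet

namespace DblDet
namespace Data

variable {m n r : ℕ}

/-- Any grid point compatible with all facet points lies in the facet. -/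
theorem mem_of_compat (D : Data m n r) {i j k : ℕ} (hgrid : (i, j, k) ∈ gridP m n r)
    (hcompat : ∀ p ∈ D.facet, ¬ DiagPair p (i, j, k) ∧ ¬ DiagPair (i, j, k) p) :
    (i, j, k) ∈ D.facet := by
  obtain ⟨hi1, him, hj1, hjn, hk1, hkr⟩ := gridP_mk.mp hgrid
  -- i ≤ g (k-1)
  have hig : i ≤ D.g (k - 1) := by
    by_contra hlt
    push_neg at hlt
    have hk2 : 2 ≤ k := by
      by_contra hc
      have hke : k = 1 := by omega
      subst hke
      have := D.g0
      simp only [Nat.sub_self] at hlt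
      omega
    -- witness in layer k-1, column g(k-1)
    have hw : (D.g (k-1), D.d (k-1) (D.g (k-1)), k-1) ∈ D.facet := by
      rw [facet_mem]
      exact ⟨by omega, by omega, le_rfl, D.gant (by omega), D.dmono _ _, le_rfl⟩
    exact (hcompat _ hw).1 (diagPair_mk.mpr (Or.inr (Or.inl ⟨by omega, hlt⟩)))
  -- g k ≤ i
  have hgi : D.g k ≤ i := by
    by_contra hlt
    push_neg at hlt
    have hkr' : k < r := by
      rcases Nat.lt_or_ge k r with h | h
      · exact h
      · have := D.gr k (by omega); omega
    have hw : (D.g k, D.d (k+1) (D.g k), k+1) ∈ D.facet := by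
      rw [facet_mem]
      refine ⟨by omega, by omega, D.gmono k, ?_, D.dmono _ _, le_rfl⟩
      rw [Nat.add_sub_cancel]
    exact (hcompat _ hw).2 (diagPair_mk.mpr (Or.inr (Or.inl ⟨by omega, hlt⟩)))
  -- j ≤ d k i
  have hjd : j ≤ D.d k i := by
    by_contra hlt
    push_neg at hlt
    rcases Nat.lt_or_ge (D.g k) i with hcase | hcase
    · -- use left neighbour column (i-1, d k i, k)
      have hw : (i-1, D.d k i, k) ∈ D.facet := by
        rw [facet_mem]
        refine ⟨hk1, hkr, by omega, by omega, ?_, D.dant k (by omega)⟩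
        have : i - 1 + 1 = i := by omega
        rw [this]
      exact (hcompat _ hw).1 (diagPair_mk.mpr (Or.inl ⟨rfl, by omega, hlt⟩))
    · -- i = g k, so d k i = h (k-1)
      have hdi : D.d k i = D.h (k-1) := D.dleft k hk1 hkr i hcase
      have hk2 : 2 ≤ k := by
        by_contra hc
        have hke : k = 1 := by omega
        subst hke
        have := D.h0
        simp only [Nat.sub_self] at hdi
        omega
      -- witness: (g (k-2), h (k-1), k-1), top-right corner of layer k-1
      have e1 : k - 1 - 1 = k - 2 := by omega
      have e2 : D.d (k-1) (D.g (k-2) + 1) = D.h (k-1) := by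
        apply D.dright (k-1) (by omega) (by omega)
        rw [e1]
        omega
      have hw : (D.g (k-2), D.h (k-1), k-1) ∈ D.facet := by
        rw [facet_mem, e1]
        refine ⟨by omega, by omega, D.gant (by omega), le_rfl, e2.le, ?_⟩
        rw [← e2]; exact D.dmono _ _
      exact (hcompat _ hw).1 (diagPair_mk.mpr (Or.inr (Or.inr ⟨by omega, by omega⟩)))
  -- d k (i+1) ≤ j
  have hdj : D.d k (i+1) ≤ j := by
    by_contra hlt
    push_neg at hlt
    rcases Nat.lt_or_ge i (D.g (k-1)) with hcase | hcase
    · -- use right neighbour column (i+1, d k (i+1), k)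
      have hw : (i+1, D.d k (i+1), k) ∈ D.facet := by
        rw [facet_mem]
        exact ⟨hk1, hkr, by omega, by omega, D.dmono _ _, le_rfl⟩
      exact (hcompat _ hw).2 (diagPair_mk.mpr (Or.inl ⟨rfl, by omega, hlt⟩))
    · -- i = g (k-1): d k (i+1) = h k
      have hdi : D.d k (i+1) = D.h k := D.dright k hk1 hkr (i+1) (by omega)
      have hkr' : k < r := by
        rcases Nat.lt_or_ge k r with h | h
        · exact h
        · have := D.hr k (by omega); omega
      -- witness: (g (k+1), h k, k+1)
      have hw : (D.g (k+1), D.h k, k+1) ∈ D.facet := by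
        rw [facet_mem]
        have e1 : k + 1 - 1 = k := by omega
        have e2 : D.d (k+1) (D.g (k+1)) = D.h k := by
          have := D.dleft (k+1) (by omega) (by omega) (D.g (k+1)) le_rfl
          rwa [e1] at this
        refine ⟨by omega, by omega, le_rfl, ?_, ?_, e2.ge⟩
        · rw [e1]; exact D.gmono k
        · rw [← e2]; exact D.dmono _ _
      exact (hcompat _ hw).2 (diagPair_mk.mpr (Or.inr (Or.inr ⟨by omega, by omega⟩)))
  exact facet_mem.mpr ⟨hk1, hkr, hgi, hig, hdj, hjd⟩

theorem facet_max (D : Data m n r) : MaxDiagFree m n r D.facet := by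
  refine ⟨D.facet_diagFree, ?_⟩
  intro G hG hsub
  apply Set.Subset.antisymm _ hsub
  rintro ⟨i, j, k⟩ hq
  apply D.mem_of_compat (hG.1 hq)
  intro p hp
  exact ⟨hG.2 p (hsub hp) _ hq, hG.2 _ hq p (hsub hp)⟩

end Data
end DblDet

namespace DblDet
namespace Data

variable {m n r : ℕ}

theorem g_le_of_facet_eq {D E : Data m n r} (hS : D.facet = E.facet) {k : ℕ}
    (hk1 : 1 ≤ k) (hkr : k ≤ r) : D.g k ≤ E.g k := by
  have hw : (E.g k, E.d k (E.g k), k) ∈ E.facet :=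
    facet_mem.mpr ⟨hk1, hkr, le_rfl, E.gant (by omega), E.dmono _ _, le_rfl⟩
  rw [← hS] at hw
  exact (facet_mem.mp hw).2.2.1

theorem h_le_of_facet_eq {D E : Data m n r} (hS : D.facet = E.facet) {k : ℕ}
    (hk1 : 1 ≤ k) (hkr : k ≤ r) : D.h k ≤ E.h k := by
  have hw : (E.g (k-1), E.h k, k) ∈ E.facet := by
    refine facet_mem.mpr ⟨hk1, hkr, E.gant (by omega), le_rfl,
      (E.dright k hk1 hkr _ (by omega)).le, E.le_d hk1 hkr _⟩
  rw [← hS] at hw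
  have := (facet_mem.mp hw).2.2.2.2.1
  exact le_trans (D.le_d hk1 hkr _) this

theorem facet_injective : Function.Injective (facet : Data m n r → Set (ℕ × ℕ × ℕ)) := by
  intro D E hS
  have hg : D.g = E.g := by
    funext k
    rcases Nat.eq_zero_or_pos k with h0 | h0
    · rw [h0, D.g0, E.g0]
    rcases le_or_gt r k with hk | hk
    · rw [D.gr k hk, E.gr k hk]
    · exact le_antisymm (g_le_of_facet_eq hS h0 hk.le) (g_le_of_facet_eq hS.symm h0 hk.le)
  have hh : D.h = E.h := by
    funext k
    rcases Nat.eq_zero_or_pos k with h0 | h0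
    · rw [h0, D.h0, E.h0]
    rcases le_or_gt r k with hk | hk
    · rw [D.hr k hk, E.hr k hk]
    · exact le_antisymm (h_le_of_facet_eq hS h0 hk.le) (h_le_of_facet_eq hS.symm h0 hk.le)
  refine ext' hg hh ?_
  funext k i
  by_cases hk : 1 ≤ k ∧ k ≤ r
  · obtain ⟨hk1, hkr⟩ := hk
    rcases le_or_gt i (D.g k) with hi | hi
    · rw [D.dleft k hk1 hkr i hi, E.dleft k hk1 hkr i (hg ▸ hi), hh]
    rcases le_or_gt i (D.g (k-1)) with hi2 | hi2
    · -- middle column: compare via points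
      have h1 : E.d k i ≤ D.d k i := by
        have hw : (i, E.d k i, k) ∈ E.facet :=
          facet_mem.mpr ⟨hk1, hkr, by rw [← hg]; omega, by rw [← hg]; omega,
            E.dmono _ _, le_rfl⟩
        rw [← hS] at hw
        exact (facet_mem.mp hw).2.2.2.2.2
      have h2 : D.d k i ≤ E.d k i := by
        have hw : (i, D.d k i, k) ∈ D.facet :=
          facet_mem.mpr ⟨hk1, hkr, by omega, by omega, D.dmono _ _, le_rfl⟩
        rw [hS] at hw
        exact (facet_mem.mp hw).2.2.2.2.2
      omega
    · rw [D.dright k hk1 hkr i hi2, E.dright k hk1 hkr i (hg ▸ hi2), hh]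
  · have : k = 0 ∨ r < k := by omega
    rw [D.dout k this i, E.dout k this i]

end Data
end DblDet

namespace DblDet

theorem fg_le {P : ℕ → Prop} [DecidablePred P] {n B : ℕ} (h : ∀ j, P j → j ≤ B) :
    Nat.findGreatest P n ≤ B := by
  rcases Nat.eq_zero_or_pos (Nat.findGreatest P n) with h0 | h0
  · omega
  · exact h _ ((Nat.findGreatest_eq_iff.1 rfl).2.1 (by omega))

section Construct

variable (m n r : ℕ) (F : Set (ℕ × ℕ × ℕ))

noncomputable def sG (k : ℕ) : ℕ :=
  sInf (insert m {i | ∃ j k', 1 ≤ k' ∧ k' ≤ k ∧ (i, j, k') ∈ F})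

noncomputable def gC (k : ℕ) : ℕ := if r ≤ k then 1 else sG m F k

noncomputable def sH (k : ℕ) : ℕ :=
  sInf (insert n {j | ∃ i k', 1 ≤ k' ∧ k' ≤ k ∧ (i, j, k') ∈ F})

noncomputable def hC (k : ℕ) : ℕ := if r ≤ k then 1 else sH n F k

open Classical in
noncomputable def dC (k i : ℕ) : ℕ :=
  if 1 ≤ k ∧ k ≤ r then
    if i ≤ gC m r F k then hC n r F (k-1)
    else if gC m r F (k-1) < i then hC n r F k
    else max (hC n r F k) (Nat.findGreatest (fun j => ∃ i', i ≤ i' ∧ (i', j, k) ∈ F) n)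
  else 1

variable {m n r F}

theorem mem_grid (hDF : DiagFree m n r F) {i j k : ℕ} (h : (i, j, k) ∈ F) :
    1 ≤ i ∧ i ≤ m ∧ 1 ≤ j ∧ j ≤ n ∧ 1 ≤ k ∧ k ≤ r := hDF.1 h

theorem cross (hDF : DiagFree m n r F) {i j k i' j' k' : ℕ}
    (h' : (i', j', k') ∈ F) (h : (i, j, k) ∈ F) (hk : k' < k) : i ≤ i' ∧ j ≤ j' := by
  have := hDF.2 _ h' _ h
  rw [Data.diagPair_mk] at this
  push_neg at this
  exact ⟨this.2.1 hk, this.2.2 hk⟩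

theorem sameL (hDF : DiagFree m n r F) {i j i' j' k : ℕ}
    (h : (i, j, k) ∈ F) (h' : (i', j', k) ∈ F) (hii : i < i') : j' ≤ j := by
  have := hDF.2 _ h _ h'
  rw [Data.diagPair_mk] at this
  push_neg at this
  exact this.1 rfl hii

theorem sG_le_m (k : ℕ) : sG m F k ≤ m := Nat.sInf_le (Set.mem_insert _ _)

theorem sG_pos (hDF : DiagFree m n r F) (hm : 1 ≤ m) (k : ℕ) : 1 ≤ sG m F k := by
  apply le_csInf ⟨m, Set.mem_insert _ _⟩
  rintro b hb
  rcases Set.mem_insert_iff.mp hb with rfl | ⟨j, k', _, _, hbF⟩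
  · exact hm
  · exact (mem_grid hDF hbF).1

theorem sG_anti {k k' : ℕ} (hk : k ≤ k') : sG m F k' ≤ sG m F k := by
  simp only [sG]
  have hmem := Nat.sInf_mem (⟨m, Set.mem_insert _ _⟩ :
    (insert m {i | ∃ j k'', 1 ≤ k'' ∧ k'' ≤ k ∧ (i, j, k'') ∈ F}).Nonempty)
  apply Nat.sInf_le
  rcases Set.mem_insert_iff.mp hmem with h | ⟨j, kk, h1, h2, hbF⟩
  · rw [h]; exact Set.mem_insert _ _
  · exact Set.mem_insert_iff.mpr (Or.inr ⟨j, kk, h1, le_trans h2 hk, hbF⟩)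

theorem sG_le_mem {i j k k' : ℕ} (h : (i, j, k') ∈ F) (h1 : 1 ≤ k') (h2 : k' ≤ k) :
    sG m F k ≤ i := Nat.sInf_le (Set.mem_insert_iff.mpr (Or.inr ⟨j, k', h1, h2, h⟩))

theorem le_sG (hDF : DiagFree m n r F) {i j k kk : ℕ} (h : (i, j, k) ∈ F) (hkk : kk < k) :
    i ≤ sG m F kk := by
  apply le_csInf ⟨m, Set.mem_insert _ _⟩
  rintro b hb
  rcases Set.mem_insert_iff.mp hb with rfl | ⟨j', k', h1, h2, hbF⟩
  · exact (mem_grid hDF h).2.1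
  · exact (cross hDF hbF h (by omega)).1

theorem sH_le_n (k : ℕ) : sH n F k ≤ n := Nat.sInf_le (Set.mem_insert _ _)

theorem sH_pos (hDF : DiagFree m n r F) (hn : 1 ≤ n) (k : ℕ) : 1 ≤ sH n F k := by
  apply le_csInf ⟨n, Set.mem_insert _ _⟩
  rintro b hb
  rcases Set.mem_insert_iff.mp hb with rfl | ⟨i, k', _, _, hbF⟩
  · exact hn
  · exact (mem_grid hDF hbF).2.2.1

theorem sH_anti {k k' : ℕ} (hk : k ≤ k') : sH n F k' ≤ sH n F k := by
  simp only [sH]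
  have hmem := Nat.sInf_mem (⟨n, Set.mem_insert _ _⟩ :
    (insert n {j | ∃ i k'', 1 ≤ k'' ∧ k'' ≤ k ∧ (i, j, k'') ∈ F}).Nonempty)
  apply Nat.sInf_le
  rcases Set.mem_insert_iff.mp hmem with h | ⟨i, kk, h1, h2, hbF⟩
  · rw [h]; exact Set.mem_insert _ _
  · exact Set.mem_insert_iff.mpr (Or.inr ⟨i, kk, h1, le_trans h2 hk, hbF⟩)

theorem sH_le_mem {i j k k' : ℕ} (h : (i, j, k') ∈ F) (h1 : 1 ≤ k') (h2 : k' ≤ k) :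
    sH n F k ≤ j := Nat.sInf_le (Set.mem_insert_iff.mpr (Or.inr ⟨i, k', h1, h2, h⟩))

theorem le_sH (hDF : DiagFree m n r F) {i j k kk : ℕ} (h : (i, j, k) ∈ F) (hkk : kk < k) :
    j ≤ sH n F kk := by
  apply le_csInf ⟨n, Set.mem_insert _ _⟩
  rintro b hb
  rcases Set.mem_insert_iff.mp hb with rfl | ⟨i', k', h1, h2, hbF⟩
  · exact (mem_grid hDF h).2.2.2.1
  · exact (cross hDF hbF h (by omega)).2

-- gC / hC facts
theorem gC_zero (hr : 1 ≤ r) : gC m r F 0 = m := by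
  rw [gC, if_neg (by omega)]
  apply le_antisymm (sG_le_m 0)
  apply le_csInf ⟨m, Set.mem_insert _ _⟩
  rintro b hb
  rcases Set.mem_insert_iff.mp hb with rfl | ⟨j', k', h1, h2, hbF⟩
  · exact le_rfl
  · omega

theorem gC_r {k : ℕ} (hk : r ≤ k) : gC m r F k = 1 := if_pos hk

theorem gC_mono (hDF : DiagFree m n r F) (hm : 1 ≤ m) (k : ℕ) :
    gC m r F (k+1) ≤ gC m r F k := by
  rw [gC, gC]
  rcases le_or_gt r k with hk | hk
  · rw [if_pos hk, if_pos (by omega)]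
  rcases le_or_gt r (k+1) with hk2 | hk2
  · rw [if_pos hk2, if_neg (by omega)]
    exact sG_pos hDF hm k
  · rw [if_neg (by omega), if_neg (by omega)]
    exact sG_anti (by omega)

theorem gC_pos (hDF : DiagFree m n r F) (hm : 1 ≤ m) (k : ℕ) : 1 ≤ gC m r F k := by
  rw [gC]; split
  · exact le_rfl
  · exact sG_pos hDF hm k

theorem hC_zero (hr : 1 ≤ r) : hC n r F 0 = n := by
  rw [hC, if_neg (by omega)]
  apply le_antisymm (sH_le_n 0)
  apply le_csInf ⟨n, Set.mem_insert _ _⟩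
  rintro b hb
  rcases Set.mem_insert_iff.mp hb with rfl | ⟨j', k', h1, h2, hbF⟩
  · exact le_rfl
  · omega

theorem hC_r {k : ℕ} (hk : r ≤ k) : hC n r F k = 1 := if_pos hk

theorem hC_mono (hDF : DiagFree m n r F) (hn : 1 ≤ n) (k : ℕ) :
    hC n r F (k+1) ≤ hC n r F k := by
  rw [hC, hC]
  rcases le_or_gt r k with hk | hk
  · rw [if_pos hk, if_pos (by omega)]
  rcases le_or_gt r (k+1) with hk2 | hk2
  · rw [if_pos hk2, if_neg (by omega)]
    exact sH_pos hDF hn k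
  · rw [if_neg (by omega), if_neg (by omega)]
    exact sH_anti (by omega)

theorem hC_anti (hDF : DiagFree m n r F) (hn : 1 ≤ n) : Antitone (hC n r F) :=
  antitone_nat_of_succ_le (hC_mono hDF hn)

-- the j-value bound: any j appearing in layer k of F is ≤ hC (k-1)
theorem le_hC_pred (hDF : DiagFree m n r F) {i j k : ℕ} (h : (i, j, k) ∈ F)
    (hk1 : 1 ≤ k) (hkr : k ≤ r) : j ≤ hC n r F (k-1) := by
  rw [hC, if_neg (by omega)]
  exact le_sH hDF h (by omega)

theorem hC_le_mem (hDF : DiagFree m n r F) {i j k : ℕ} (h : (i, j, k) ∈ F)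
    (hk1 : 1 ≤ k) (hkr : k ≤ r) : hC n r F k ≤ j := by
  rw [hC]; split
  · exact (mem_grid hDF h).2.2.1
  · exact sH_le_mem h hk1 le_rfl

-- dC case lemmas
theorem dC_left {k i : ℕ} (hk : 1 ≤ k ∧ k ≤ r) (hi : i ≤ gC m r F k) :
    dC m n r F k i = hC n r F (k-1) := by
  rw [dC, if_pos hk, if_pos hi]

theorem dC_right (hDF : DiagFree m n r F) (hm : 1 ≤ m) {k i : ℕ}
    (hk : 1 ≤ k ∧ k ≤ r) (hi : gC m r F (k-1) < i) :
    dC m n r F k i = hC n r F k := by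
  have hgg : gC m r F k ≤ gC m r F (k-1) := by
    have := gC_mono hDF hm (k-1)
    have e : k - 1 + 1 = k := by omega
    rwa [e] at this
  rw [dC, if_pos hk, if_neg (by omega), if_pos hi]

open Classical in
theorem dC_mid {k i : ℕ} (hk : 1 ≤ k ∧ k ≤ r) (hi1 : gC m r F k < i)
    (hi2 : i ≤ gC m r F (k-1)) :
    dC m n r F k i = max (hC n r F k)
      (Nat.findGreatest (fun j => ∃ i', i ≤ i' ∧ (i', j, k) ∈ F) n) := by
  rw [dC, if_pos hk, if_neg (by omega), if_neg (by omega)]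

theorem dC_out {k : ℕ} (hk : k = 0 ∨ r < k) (i : ℕ) : dC m n r F k i = 1 := by
  rw [dC, if_neg (by omega)]

open Classical in
theorem FG_le_hC_pred (hDF : DiagFree m n r F) {k : ℕ} (hk1 : 1 ≤ k) (hkr : k ≤ r) (i : ℕ) :
    Nat.findGreatest (fun j => ∃ i', i ≤ i' ∧ (i', j, k) ∈ F) n ≤ hC n r F (k-1) := by
  apply fg_le
  rintro j ⟨i', hi', hF'⟩
  exact le_hC_pred hDF hF' hk1 hkr

open Classical in
theorem FG_anti {k x y : ℕ} (hxy : x ≤ y) :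
    Nat.findGreatest (fun j => ∃ i', y ≤ i' ∧ (i', j, k) ∈ F) n ≤
      Nat.findGreatest (fun j => ∃ i', x ≤ i' ∧ (i', j, k) ∈ F) n := by
  apply Nat.findGreatest_mono _ le_rfl
  rintro j ⟨i', hi', hF'⟩
  exact ⟨i', by omega, hF'⟩

theorem dC_mono (hDF : DiagFree m n r F) (hm : 1 ≤ m) (hn : 1 ≤ n) (k i : ℕ) :
    dC m n r F k (i+1) ≤ dC m n r F k i := by
  by_cases hk : 1 ≤ k ∧ k ≤ r
  · have hgg : gC m r F k ≤ gC m r F (k-1) := by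
      have := gC_mono hDF hm (k-1)
      have e : k - 1 + 1 = k := by omega
      rwa [e] at this
    have hhh : hC n r F k ≤ hC n r F (k-1) := by
      have := hC_mono hDF hn (k-1)
      have e : k - 1 + 1 = k := by omega
      rwa [e] at this
    rcases le_or_gt (i+1) (gC m r F k) with c1 | c1
    · rw [dC_left hk c1, dC_left hk (by omega)]
    rcases le_or_gt i (gC m r F k) with c2 | c2
    · -- i = gC k
      rw [dC_left hk c2]
      rcases le_or_gt (i+1) (gC m r F (k-1)) with c3 | c3
      · rw [dC_mid hk c1 c3]
        exact max_le hhh (FG_le_hC_pred hDF hk.1 hk.2 _)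
      · rw [dC_right hDF hm hk c3]
        exact hhh
    rcases le_or_gt (i+1) (gC m r F (k-1)) with c4 | c4
    · rw [dC_mid hk c1 c4, dC_mid hk c2 (by omega)]
      exact max_le (le_max_left _ _) (le_trans (FG_anti (by omega)) (le_max_right _ _))
    rcases le_or_gt i (gC m r F (k-1)) with c5 | c5
    · rw [dC_right hDF hm hk c4, dC_mid hk c2 c5]
      exact le_max_left _ _
    · rw [dC_right hDF hm hk c4, dC_right hDF hm hk c5]
  · rw [dC_out (by omega) _, dC_out (by omega) _]

/-- The extension theorem: every diagonal-free set is contained in a facet. -/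
theorem exists_data_superset (hDF : DiagFree m n r F) (hm : 1 ≤ m) (hn : 1 ≤ n)
    (hr : 1 ≤ r) : ∃ D : Data m n r, F ⊆ D.facet := by
  classical
  refine ⟨⟨gC m r F, hC n r F, dC m n r F, gC_zero hr, fun k hk => gC_r hk,
    gC_mono hDF hm, hC_zero hr, fun k hk => hC_r hk, hC_mono hDF hn,
    dC_mono hDF hm hn, ?_, ?_, fun k hk i => dC_out hk i⟩, ?_⟩
  · intro k h1 h2 i hi
    exact dC_left ⟨h1, h2⟩ hi
  · intro k h1 h2 i hi
    exact dC_right hDF hm ⟨h1, h2⟩ hi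
  · rintro ⟨i, j, k⟩ hp
    obtain ⟨hi1, him, hj1, hjn, hk1, hkr⟩ := mem_grid hDF hp
    rw [Data.facet_mem]
    simp only
    have hgi : gC m r F k ≤ i := by
      rw [gC]; split
      · exact hi1
      · exact sG_le_mem hp hk1 le_rfl
    have hig : i ≤ gC m r F (k-1) := by
      rw [gC, if_neg (by omega)]
      exact le_sG hDF hp (by omega)
    refine ⟨hk1, hkr, hgi, hig, ?_, ?_⟩
    · -- dC k (i+1) ≤ j
      rcases le_or_gt (i+1) (gC m r F k) with c1 | c1
      · omega
      rcases le_or_gt (i+1) (gC m r F (k-1)) with c2 | c2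
      · rw [dC_mid ⟨hk1, hkr⟩ c1 c2]
        apply max_le (hC_le_mem hDF hp hk1 hkr)
        apply fg_le
        rintro j' ⟨i', hi', hF'⟩
        exact sameL hDF hp hF' (by omega)
      · rw [dC_right hDF hm ⟨hk1, hkr⟩ c2]
        exact hC_le_mem hDF hp hk1 hkr
    · -- j ≤ dC k i
      rcases le_or_gt i (gC m r F k) with c1 | c1
      · rw [dC_left ⟨hk1, hkr⟩ c1]
        exact le_hC_pred hDF hp hk1 hkr
      · rw [dC_mid ⟨hk1, hkr⟩ c1 hig]
        exact le_trans (Nat.le_findGreatest hjn ⟨i, le_rfl, hp⟩) (le_max_right _ _)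

end Construct

/-- The classification: maximal diagonal-free sets are exactly the facets of data. -/
theorem maxDiagFree_iff {m n r : ℕ} (hm : 1 ≤ m) (hn : 1 ≤ n) (hr : 1 ≤ r)
    {F : Set (ℕ × ℕ × ℕ)} : MaxDiagFree m n r F ↔ ∃ D : Data m n r, D.facet = F := by
  constructor
  · rintro ⟨hDF, hmax⟩
    obtain ⟨D, hsub⟩ := exists_data_superset hDF hm hn hr
    exact ⟨D, hmax _ D.facet_diagFree hsub⟩
  · rintro ⟨D, rfl⟩
    exact D.facet_max

end DblDet

namespace DblDet
namespace Data

variable {m n r : ℕ}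

theorem d_le_n1 (D : Data m n r) (k i : ℕ) : D.d k i ≤ n + 1 := by
  by_cases hk : 1 ≤ k ∧ k ≤ r
  · exact le_trans (le_trans (D.d_le hk.1 hk.2 i) (D.h_le _)) (by omega)
  · rw [D.dout k (by omega) i]; omega

noncomputable instance : Finite (Data m n r) := by
  apply Finite.of_injective (fun D : Data m n r =>
    ((fun k : Fin (r+1) => (⟨D.g k, by have := D.g_le k; omega⟩ : Fin (m+1))),
     (fun k : Fin (r+1) => (⟨D.h k, by have := D.h_le k; omega⟩ : Fin (n+1))),
     (fun (k : Fin (r+1)) (i : Fin (m+2)) => (⟨D.d k i, by have := D.d_le_n1 k i; omega⟩ : Fin (n+2)))))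
  intro D E hDE
  rw [Prod.mk.injEq, Prod.mk.injEq] at hDE
  obtain ⟨h1, h2, h3⟩ := hDE
  have hg : D.g = E.g := by
    funext k
    rcases le_or_gt k r with hk | hk
    · have := congrFun h1 ⟨k, by omega⟩
      simpa using this
    · rw [D.gr k (by omega), E.gr k (by omega)]
  have hh : D.h = E.h := by
    funext k
    rcases le_or_gt k r with hk | hk
    · have := congrFun h2 ⟨k, by omega⟩
      simpa using this
    · rw [D.hr k (by omega), E.hr k (by omega)]
  refine ext' hg hh ?_
  funext k i
  by_cases hk : 1 ≤ k ∧ k ≤ r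
  · rcases le_or_gt i (m+1) with hi | hi
    · have := congrFun (congrFun h3 ⟨k, by omega⟩) ⟨i, by omega⟩
      simpa using this
    · rw [D.dright k hk.1 hk.2 i (by have := D.g_le (k-1); omega),
        E.dright k hk.1 hk.2 i (by have := E.g_le (k-1); omega), hh]
  · rw [D.dout k (by omega) i, E.dout k (by omega) i]

/-- Case predicates: the first letter of the word is M / N / R. -/
def Mcase (D : Data m n r) : Prop := D.d 1 m = D.h 1 ∧ D.g 1 < m
def Ncase (D : Data m n r) : Prop := D.h 1 < D.d 1 m
def Rcase (D : Data m n r) : Prop := D.g 1 = m ∧ D.h 1 = n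

theorem h1_le_d1m (D : Data m n r) (hr : 1 ≤ r) : D.h 1 ≤ D.d 1 m := D.le_d le_rfl hr m

theorem trichotomy (D : Data m n r) (hr : 1 ≤ r) :
    Mcase D ∨ Ncase D ∨ Rcase D := by
  rcases lt_or_ge (D.h 1) (D.d 1 m) with hc | hc
  · exact Or.inr (Or.inl hc)
  have heq : D.d 1 m = D.h 1 := le_antisymm hc (D.h1_le_d1m hr)
  rcases lt_or_ge (D.g 1) m with hg | hg
  · exact Or.inl ⟨heq, hg⟩
  · have hg1 : D.g 1 = m := le_antisymm (by have h1 : D.g 1 ≤ D.g 0 := D.gmono 0; have := D.g0; omega) hg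
    have : D.d 1 m = D.h 0 := D.dleft 1 le_rfl hr m (by omega)
    rw [D.h0] at this
    exact Or.inr (Or.inr ⟨hg1, by omega⟩)

theorem not_M_of_N {D : Data m n r} (hN : Ncase D) : ¬ Mcase D := by
  intro hM; rw [Mcase] at hM; rw [Ncase] at hN; omega

theorem not_M_of_R {D : Data m n r} (hr : 1 ≤ r) (hR : Rcase D) : ¬ Mcase D := by
  intro hM; rw [Mcase] at hM; rw [Rcase] at hR; omega

theorem not_N_of_R {D : Data m n r} (hr : 1 ≤ r) (hR : Rcase D) : ¬ Ncase D := by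
  intro hN
  rw [Rcase] at hR
  have : D.d 1 m = D.h 0 := D.dleft 1 le_rfl hr m (by omega)
  rw [D.h0] at this
  rw [Ncase, this, hR.2] at hN
  have := D.h_le 0
  omega

/-- The M-case equivalence: strip the first `M`. -/
noncomputable def equivM (m n r : ℕ) (hr : 1 ≤ r) :
    {D : Data (m+1) n r // Mcase D} ≃ Data m n r where
  toFun := fun ⟨D, hD⟩ =>
    { g := fun k => if k = 0 then m else D.g k
      h := D.h
      d := D.d
      g0 := if_pos rfl
      gr := fun k hk => by rw [if_neg (by omega)]; exact D.gr k hk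
      gmono := fun k => by
        rcases Nat.eq_zero_or_pos k with rfl | hk
        · rw [if_neg (by omega), if_pos rfl]
          simp only [Nat.zero_add]
          have := hD.2; omega
        · rw [if_neg (by omega), if_neg (by omega)]; exact D.gmono k
      h0 := D.h0
      hr := D.hr
      hmono := D.hmono
      dmono := D.dmono
      dleft := fun k h1 h2 i hi => by
        rw [if_neg (by omega)] at hi
        exact D.dleft k h1 h2 i hi
      dright := fun k h1 h2 i hi => by
        rcases Nat.eq_or_lt_of_le h1 with h1' | h1'
        · subst h1'
          rw [if_pos rfl] at hi
          rcases Nat.lt_or_ge (m+1) i with hi2 | hi2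
          · exact D.dright 1 le_rfl h2 i (by rw [D.g0]; omega)
          · have : i = m + 1 := by omega
            rw [this]; exact hD.1
        · rw [if_neg (by omega)] at hi
          exact D.dright k (by omega) h2 i hi
      dout := D.dout }
  invFun := fun E =>
    ⟨{ g := fun k => if k = 0 then m+1 else E.g k
       h := E.h
       d := E.d
       g0 := if_pos rfl
       gr := fun k hk => by rw [if_neg (by omega)]; exact E.gr k hk
       gmono := fun k => by
         rcases Nat.eq_zero_or_pos k with rfl | hk
         · rw [if_neg (by omega), if_pos rfl]
           simp only [Nat.zero_add]
           have := E.g_le 1; omega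
         · rw [if_neg (by omega), if_neg (by omega)]; exact E.gmono k
       h0 := E.h0
       hr := E.hr
       hmono := E.hmono
       dmono := E.dmono
       dleft := fun k h1 h2 i hi => by
         rw [if_neg (by omega)] at hi
         exact E.dleft k h1 h2 i hi
       dright := fun k h1 h2 i hi => by
         rcases Nat.eq_or_lt_of_le h1 with h1' | h1'
         · subst h1'
           rw [if_pos rfl] at hi
           exact E.dright 1 le_rfl h2 i (by rw [E.g0]; omega)
         · rw [if_neg (by omega)] at hi
           exact E.dright k (by omega) h2 i hi
       dout := E.dout },
     by
       constructor
       · exact E.dright 1 le_rfl hr (m+1) (by rw [E.g0]; omega)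
       · dsimp only
         rw [if_neg (by omega)]
         have := E.g_le 1; omega⟩
  left_inv := fun ⟨D, hD⟩ => by
    apply Subtype.ext
    refine ext' ?_ rfl rfl
    funext k
    dsimp only
    rcases Nat.eq_zero_or_pos k with rfl | hk
    · rw [if_pos rfl, D.g0]
    · rw [if_neg (by omega), if_neg (by omega)]
  right_inv := fun E => by
    refine ext' ?_ rfl rfl
    funext k
    dsimp only
    rcases Nat.eq_zero_or_pos k with rfl | hk
    · rw [if_pos rfl, E.g0]
    · rw [if_neg (by omega), if_neg (by omega)]

end Data
end DblDet

namespace DblDet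
namespace Data

/-- The N-case equivalence: strip the first `N`. -/
noncomputable def equivN (m n r : ℕ) (hr : 1 ≤ r) :
    {D : Data m (n+1) r // Ncase D} ≃ Data m n r where
  toFun := fun ⟨D, hD⟩ =>
    { g := D.g
      h := fun k => if k = 0 then n else D.h k
      d := fun k i => if k = 1 ∧ i ≤ m then D.d 1 i - 1 else D.d k i
      g0 := D.g0
      gr := D.gr
      gmono := D.gmono
      h0 := if_pos rfl
      hr := fun k hk => by rw [if_neg (by omega)]; exact D.hr k hk
      hmono := fun k => by
        rcases Nat.eq_zero_or_pos k with rfl | hk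
        · rw [if_neg (by omega), if_pos rfl]
          simp only [Nat.zero_add]
          have h1 : D.d 1 m ≤ D.h 0 := D.d_le le_rfl hr m
          have h2 := D.h0
          have h3 : D.h 1 < D.d 1 m := hD
          omega
        · rw [if_neg (by omega), if_neg (by omega)]; exact D.hmono k
      dmono := fun k i => by
        by_cases hk1 : k = 1
        · subst hk1
          rcases le_or_gt (i+1) m with hi | hi
          · rw [if_pos ⟨rfl, hi⟩, if_pos ⟨rfl, by omega⟩]
            have := D.dmono 1 i; omega
          rcases le_or_gt i m with hi2 | hi2
          · -- i = m
            rw [if_neg (by omega), if_pos ⟨rfl, hi2⟩]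
            have he : i = m := by omega
            subst he
            have h1 : D.d 1 (i+1) = D.h 1 := D.dright 1 le_rfl hr (i+1) (by rw [D.g0]; omega)
            have h3 : D.h 1 < D.d 1 i := hD
            omega
          · rw [if_neg (by omega), if_neg (by omega)]; exact D.dmono 1 i
        · rw [if_neg (by simp [hk1]), if_neg (by simp [hk1])]; exact D.dmono k i
      dleft := fun k h1 h2 i hi => by
        by_cases hk1 : k = 1
        · subst hk1
          have him : i ≤ m := le_trans hi (by have := D.g_le 1; omega)
          rw [if_pos ⟨rfl, him⟩, if_pos (by omega)]
          have := D.dleft 1 le_rfl hr i hi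
          rw [this, D.h0]
          omega
        · rw [if_neg (by simp [hk1]), if_neg (by omega)]
          exact D.dleft k h1 h2 i hi
      dright := fun k h1 h2 i hi => by
        by_cases hk1 : k = 1
        · subst hk1
          have him : m < i := by have := D.g0; simp only [Nat.sub_self] at hi; omega
          rw [if_neg (by omega), if_neg (by omega)]
          exact D.dright 1 le_rfl hr i (by rw [D.g0]; omega)
        · rw [if_neg (by simp [hk1]), if_neg (by omega)]
          exact D.dright k h1 h2 i hi
      dout := fun k hk i => by
        rw [if_neg (by omega)]
        exact D.dout k hk i }
  invFun := fun E =>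
    ⟨{ g := E.g
       h := fun k => if k = 0 then n+1 else E.h k
       d := fun k i => if k = 1 ∧ i ≤ m then E.d 1 i + 1 else E.d k i
       g0 := E.g0
       gr := E.gr
       gmono := E.gmono
       h0 := if_pos rfl
       hr := fun k hk => by rw [if_neg (by omega)]; exact E.hr k hk
       hmono := fun k => by
         rcases Nat.eq_zero_or_pos k with rfl | hk
         · rw [if_neg (by omega), if_pos rfl]
           simp only [Nat.zero_add]
           have := E.h_le 1; omega
         · rw [if_neg (by omega), if_neg (by omega)]; exact E.hmono k
       dmono := fun k i => by
         by_cases hk1 : k = 1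
         · subst hk1
           rcases le_or_gt (i+1) m with hi | hi
           · rw [if_pos ⟨rfl, hi⟩, if_pos ⟨rfl, by omega⟩]
             have := E.dmono 1 i; omega
           rcases le_or_gt i m with hi2 | hi2
           · rw [if_neg (by omega), if_pos ⟨rfl, hi2⟩]
             have he : i = m := by omega
             subst he
             have h1 : E.d 1 (i+1) = E.h 1 := E.dright 1 le_rfl hr (i+1) (by rw [E.g0]; omega)
             have h3 : E.h 1 ≤ E.d 1 i := E.le_d le_rfl hr i
             omega
           · rw [if_neg (by omega), if_neg (by omega)]; exact E.dmono 1 i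
         · rw [if_neg (by simp [hk1]), if_neg (by simp [hk1])]; exact E.dmono k i
       dleft := fun k h1 h2 i hi => by
         by_cases hk1 : k = 1
         · subst hk1
           have him : i ≤ m := le_trans hi (by have := E.g_le 1; omega)
           rw [if_pos ⟨rfl, him⟩, if_pos (by omega)]
           have := E.dleft 1 le_rfl hr i hi
           rw [this, E.h0]
         · rw [if_neg (by simp [hk1]), if_neg (by omega)]
           exact E.dleft k h1 h2 i hi
       dright := fun k h1 h2 i hi => by
         by_cases hk1 : k = 1
         · subst hk1
           have him : m < i := by have := E.g0; simp only [Nat.sub_self] at hi; omega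
           rw [if_neg (by omega), if_neg (by omega)]
           exact E.dright 1 le_rfl hr i (by rw [E.g0]; omega)
         · rw [if_neg (by simp [hk1]), if_neg (by omega)]
           exact E.dright k h1 h2 i hi
       dout := fun k hk i => by
         rw [if_neg (by omega)]
         exact E.dout k hk i },
     by
       show (_ : ℕ) < _
       dsimp only
       rw [if_neg (by omega), if_pos ⟨rfl, le_rfl⟩]
       have h3 : E.h 1 ≤ E.d 1 m := E.le_d le_rfl hr m
       omega⟩
  left_inv := fun ⟨D, hD⟩ => by
    apply Subtype.ext
    refine ext' rfl ?_ ?_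
    · funext k
      dsimp only
      rcases Nat.eq_zero_or_pos k with rfl | hk
      · rw [if_pos rfl, D.h0]
      · rw [if_neg (by omega), if_neg (by omega)]
    · funext k i
      dsimp only
      by_cases hki : k = 1 ∧ i ≤ m
      · rw [if_pos hki, if_pos ⟨rfl, hki.2⟩]
        have h1 : D.d 1 m ≤ D.d 1 i := D.dant 1 hki.2
        have h3 : D.h 1 < D.d 1 m := hD
        obtain ⟨hk1, _⟩ := hki
        subst hk1
        omega
      · rw [if_neg hki, if_neg hki]
  right_inv := fun E => by
    refine ext' rfl ?_ ?_
    · funext k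
      dsimp only
      rcases Nat.eq_zero_or_pos k with rfl | hk
      · rw [if_pos rfl, E.h0]
      · rw [if_neg (by omega), if_neg (by omega)]
    · funext k i
      dsimp only
      by_cases hki : k = 1 ∧ i ≤ m
      · rw [if_pos hki, if_pos ⟨rfl, hki.2⟩]
        obtain ⟨hk1, _⟩ := hki
        subst hk1
        omega
      · rw [if_neg hki, if_neg hki]

/-- The R-case equivalence: strip the first `R`. -/
noncomputable def equivR (m n r : ℕ) (hm : 1 ≤ m) (hn : 1 ≤ n) (hr : 1 ≤ r) :
    {D : Data m n (r+1) // Rcase D} ≃ Data m n r where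
  toFun := fun ⟨D, hD⟩ =>
    { g := fun k => if k = 0 then m else D.g (k+1)
      h := fun k => if k = 0 then n else D.h (k+1)
      d := fun k i => if k = 0 then 1 else D.d (k+1) i
      g0 := if_pos rfl
      gr := fun k hk => by
        rw [if_neg (by omega)]; exact D.gr (k+1) (by omega)
      gmono := fun k => by
        rcases Nat.eq_zero_or_pos k with rfl | hk
        · rw [if_neg (by omega), if_pos rfl]
          norm_num
          have h1 : D.g 2 ≤ D.g 1 := D.gmono 1
          have h2 : D.g 1 = m := hD.1
          omega
        · rw [if_neg (by omega), if_neg (by omega)]; exact D.gmono (k+1)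
      h0 := if_pos rfl
      hr := fun k hk => by
        rw [if_neg (by omega)]; exact D.hr (k+1) (by omega)
      hmono := fun k => by
        rcases Nat.eq_zero_or_pos k with rfl | hk
        · rw [if_neg (by omega), if_pos rfl]
          norm_num
          have h1 : D.h 2 ≤ D.h 1 := D.hmono 1
          have h2 : D.h 1 = n := hD.2
          omega
        · rw [if_neg (by omega), if_neg (by omega)]; exact D.hmono (k+1)
      dmono := fun k i => by
        rcases Nat.eq_zero_or_pos k with rfl | hk
        · rw [if_pos rfl, if_pos rfl]
        · rw [if_neg (by omega), if_neg (by omega)]; exact D.dmono (k+1) i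
      dleft := fun k h1 h2 i hi => by
        rw [if_neg (by omega)] at hi
        rw [if_neg (by omega)]
        have := D.dleft (k+1) (by omega) (by omega) i (by simpa using hi)
        rw [this]
        have e : k + 1 - 1 = k := by omega
        rw [e]
        rcases Nat.eq_zero_or_pos (k-1) with h0 | h0
        · have hk1 : k = 1 := by omega
          rw [if_pos (by omega), hk1, hD.2]
        · rw [if_neg (by omega)]
          have e2 : k - 1 + 1 = k := by omega
          rw [e2]
      dright := fun k h1 h2 i hi => by
        rw [if_neg (by omega)]
        rcases Nat.eq_or_lt_of_le h1 with h1' | h1'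
        · -- k = 1
          subst h1'
          rw [if_pos rfl] at hi
          have := D.dright 2 (by omega) (by omega) i (by
            show D.g (2-1) < i
            rw [show (2:ℕ) - 1 = 1 from rfl, hD.1]
            exact hi)
          rw [this]
          rw [if_neg (by omega)]
        · rw [if_neg (by omega)] at hi
          have := D.dright (k+1) (by omega) (by omega) i (by
            have e : k + 1 - 1 = k := by omega
            rw [e]
            have e2 : k - 1 + 1 = k := by omega
            calc D.g k = D.g (k-1+1) := by rw [e2]
            _ < i := hi)
          rw [this, if_neg (by omega)]
      dout := fun k hk i => by
        rcases hk with rfl | hk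
        · rw [if_pos rfl]
        · rw [if_neg (by omega)]
          exact D.dout (k+1) (by omega) i }
  invFun := fun E =>
    ⟨{ g := fun k => if k = 0 then m else E.g (k-1)
       h := fun k => if k = 0 then n else E.h (k-1)
       d := fun k i => if k = 0 then 1 else if k = 1 then n else E.d (k-1) i
       g0 := if_pos rfl
       gr := fun k hk => by
         rw [if_neg (by omega)]; exact E.gr (k-1) (by omega)
       gmono := fun k => by
         rcases Nat.eq_zero_or_pos k with rfl | hk
         · rw [if_neg (by omega), if_pos rfl]
           simp only [Nat.add_sub_cancel]
           exact E.g0.le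
         · rw [if_neg (by omega), if_neg (by omega)]
           have e : k + 1 - 1 = k - 1 + 1 := by omega
           rw [e]
           exact E.gmono (k-1)
       h0 := if_pos rfl
       hr := fun k hk => by
         rw [if_neg (by omega)]; exact E.hr (k-1) (by omega)
       hmono := fun k => by
         rcases Nat.eq_zero_or_pos k with rfl | hk
         · rw [if_neg (by omega), if_pos rfl]
           simp only [Nat.add_sub_cancel]
           exact E.h0.le
         · rw [if_neg (by omega), if_neg (by omega)]
           have e : k + 1 - 1 = k - 1 + 1 := by omega
           rw [e]
           exact E.hmono (k-1)
       dmono := fun k i => by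
         rcases Nat.eq_zero_or_pos k with rfl | hk
         · rw [if_pos rfl, if_pos rfl]
         by_cases hk1 : k = 1
         · subst hk1
           norm_num
         · rw [if_neg (by omega), if_neg hk1, if_neg (by omega), if_neg hk1]
           exact E.dmono (k-1) i
       dleft := fun k h1 h2 i hi => by
         rcases Nat.eq_or_lt_of_le h1 with h1' | h1'
         · subst h1'
           rw [if_neg (by omega), if_pos rfl, if_pos (by norm_num)]
         · rw [if_neg (by omega)] at hi
           rw [if_neg (by omega), if_neg (by omega)]
           have := E.dleft (k-1) (by omega) (by omega) i hi
           rw [this, if_neg (by omega)]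
       dright := fun k h1 h2 i hi => by
         rcases Nat.eq_or_lt_of_le h1 with h1' | h1'
         · subst h1'
           rw [if_neg (by omega), if_pos rfl, if_neg (by omega)]
           rw [show (1:ℕ) - 1 = 0 from rfl, E.h0]
         · rw [if_neg (by omega)] at hi
           rw [if_neg (by omega), if_neg (by omega), if_neg (by omega)]
           exact E.dright (k-1) (by omega) (by omega) i hi
       dout := fun k hk i => by
         rcases hk with rfl | hk
         · rw [if_pos rfl]
         · rw [if_neg (by omega), if_neg (by omega)]
           exact E.dout (k-1) (by omega) i },
     by
       constructor
       · show (if (1:ℕ) = 0 then m else E.g (1-1)) = m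
         rw [if_neg (by omega)]
         simp only [Nat.sub_self]
         exact E.g0
       · show (if (1:ℕ) = 0 then n else E.h (1-1)) = n
         rw [if_neg (by omega)]
         simp only [Nat.sub_self]
         exact E.h0⟩
  left_inv := fun ⟨D, hD⟩ => by
    apply Subtype.ext
    refine ext' ?_ ?_ ?_
    · funext k
      dsimp only
      rcases Nat.eq_zero_or_pos k with rfl | hk
      · rw [if_pos rfl, D.g0]
      rcases Nat.eq_or_lt_of_le hk with hk1 | hk1
      · rw [if_neg (by omega), if_pos (by omega), ← hk1, hD.1]
      · rw [if_neg (by omega), if_neg (by omega)]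
        have e : k - 1 + 1 = k := by omega
        rw [e]
    · funext k
      dsimp only
      rcases Nat.eq_zero_or_pos k with rfl | hk
      · rw [if_pos rfl, D.h0]
      rcases Nat.eq_or_lt_of_le hk with hk1 | hk1
      · rw [if_neg (by omega), if_pos (by omega), ← hk1, hD.2]
      · rw [if_neg (by omega), if_neg (by omega)]
        have e : k - 1 + 1 = k := by omega
        rw [e]
    · funext k i
      dsimp only
      rcases Nat.eq_zero_or_pos k with rfl | hk
      · rw [if_pos rfl, D.dout 0 (Or.inl rfl) i]
      rcases Nat.eq_or_lt_of_le hk with hk1 | hk1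
      · rw [if_neg (by omega), if_pos (by omega), ← hk1]
        -- show n = D.d 1 i
        rcases le_or_gt i (D.g 1) with hi | hi
        · rw [D.dleft 1 le_rfl (by omega) i hi, D.h0]
        · rw [D.dright 1 le_rfl (by omega) i (by have hg1 := hD.1; rw [D.g0]; omega), hD.2]
      · rw [if_neg (by omega), if_neg (by omega), if_neg (by omega)]
        have e : k - 1 + 1 = k := by omega
        rw [e]
  right_inv := fun E => by
    refine ext' ?_ ?_ ?_
    · funext k
      dsimp only
      rcases Nat.eq_zero_or_pos k with rfl | hk
      · rw [if_pos rfl, E.g0]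
      · rw [if_neg (by omega), if_neg (by omega)]
        simp only [Nat.add_sub_cancel]
    · funext k
      dsimp only
      rcases Nat.eq_zero_or_pos k with rfl | hk
      · rw [if_pos rfl, E.h0]
      · rw [if_neg (by omega), if_neg (by omega)]
        simp only [Nat.add_sub_cancel]
    · funext k i
      dsimp only
      rcases Nat.eq_zero_or_pos k with rfl | hk
      · rw [if_pos rfl, E.dout 0 (Or.inl rfl) i]
      · rw [if_neg (by omega), if_neg (by omega), if_neg (by omega)]
        simp only [Nat.add_sub_cancel]

end Data
end DblDet

namespace DblDet

/-- The trinomial-coefficient counting function. -/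
def T' (a b c : ℕ) : ℕ := (a+b+c).choose a * (b+c).choose b

theorem T'_a00 (a : ℕ) : T' a 0 0 = 1 := by simp [T']
theorem T'_0b0 (b : ℕ) : T' 0 b 0 = 1 := by simp [T']
theorem T'_00c (c : ℕ) : T' 0 0 c = 1 := by simp [T']

theorem T'_L1 (a b c : ℕ) :
    T' (a+1) (b+1) (c+1) = T' a (b+1) (c+1) + T' (a+1) b (c+1) + T' (a+1) (b+1) c := by
  simp only [T']
  rw [show a+1+(b+1)+(c+1) = (a+(b+1)+(c+1))+1 from by ring,
      Nat.choose_succ_succ (a+(b+1)+(c+1)) a,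
      show (b+1)+(c+1) = (b+(c+1))+1 from by ring,
      Nat.choose_succ_succ (b+(c+1)) b,
      show a+(b+1)+(c+1) = (a+1)+b+(c+1) from by ring,
      show (a+1)+(b+1)+c = (a+1)+b+(c+1) from by ring,
      show (b+1)+c = b+(c+1) from by ring]
  ring

theorem T'_L2 (b c : ℕ) : T' 0 (b+1) (c+1) = T' 0 b (c+1) + T' 0 (b+1) c := by
  simp only [T', Nat.zero_add, Nat.choose_zero_right, one_mul]
  rw [show (b+1)+(c+1) = (b+(c+1))+1 from by ring,
      Nat.choose_succ_succ (b+(c+1)) b,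
      show (b+1)+c = b+(c+1) from by ring]

theorem T'_L3 (a c : ℕ) : T' (a+1) 0 (c+1) = T' a 0 (c+1) + T' (a+1) 0 c := by
  simp only [T', Nat.add_zero, Nat.zero_add, Nat.choose_zero_right, one_mul]
  rw [show a+1+(c+1) = (a+(c+1))+1 from by ring,
      Nat.choose_succ_succ (a+(c+1)) a,
      show a+1+c = a+(c+1) from by ring]
  simp [Nat.succ_eq_add_one]

theorem T'_L4 (a b : ℕ) : T' (a+1) (b+1) 0 = T' a (b+1) 0 + T' (a+1) b 0 := by
  simp only [T', Nat.add_zero, Nat.choose_self, mul_one]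
  rw [show a+1+(b+1) = (a+(b+1))+1 from by ring,
      Nat.choose_succ_succ (a+(b+1)) a,
      show a+1+b = a+(b+1) from by ring]

namespace Data

def triv : Data 1 1 1 where
  g := fun _ => 1
  h := fun _ => 1
  d := fun _ _ => 1
  g0 := rfl
  gr := fun _ _ => rfl
  gmono := fun _ => le_rfl
  h0 := rfl
  hr := fun _ _ => rfl
  hmono := fun _ => le_rfl
  dmono := fun _ _ => le_rfl
  dleft := fun _ _ _ _ _ => rfl
  dright := fun _ _ _ _ _ => rfl
  dout := fun _ _ _ => rfl

theorem eq_triv (D : Data 1 1 1) : D = triv := by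
  refine ext' ?_ ?_ ?_
  · funext k
    rcases Nat.eq_zero_or_pos k with rfl | hk
    · exact D.g0
    · exact D.gr k hk
  · funext k
    rcases Nat.eq_zero_or_pos k with rfl | hk
    · exact D.h0
    · exact D.hr k hk
  · funext k i
    show D.d k i = 1
    by_cases hk : 1 ≤ k ∧ k ≤ 1
    · have hk1 : k = 1 := by omega
      subst hk1
      rcases le_or_gt i (D.g 1) with hi | hi
      · rw [D.dleft 1 le_rfl le_rfl i hi]
        exact D.h0
      · have hg1 : D.g 1 = 1 := D.gr 1 le_rfl
        have hg0 : D.g 0 = 1 := D.g0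
        rw [D.dright 1 le_rfl le_rfl i (by rw [show (1:ℕ)-1 = 0 from rfl, hg0]; omega)]
        exact D.hr 1 le_rfl
    · exact D.dout k (by omega) i

theorem card111 : Nat.card (Data 1 1 1) = 1 := by
  haveI : Nonempty (Data 1 1 1) := ⟨triv⟩
  haveI : Subsingleton (Data 1 1 1) := ⟨fun D E => (eq_triv D).trans (eq_triv E).symm⟩
  exact Nat.card_unique

open Classical in
/-- Splitting the non-M data into N and R cases. -/
noncomputable def eqNR {m n r : ℕ} (hr : 1 ≤ r) :
    {D : Data m n r // ¬ Mcase D} ≃ {D : Data m n r // Ncase D} ⊕ {D : Data m n r // Rcase D} where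
  toFun := fun ⟨D, hD⟩ =>
    if h : Ncase D then Sum.inl ⟨D, h⟩
    else Sum.inr ⟨D, by
      rcases D.trichotomy hr with h1 | h1 | h1
      · exact absurd h1 hD
      · exact absurd h1 h
      · exact h1⟩
  invFun := fun x => match x with
    | Sum.inl ⟨D, h⟩ => ⟨D, not_M_of_N h⟩
    | Sum.inr ⟨D, h⟩ => ⟨D, not_M_of_R hr h⟩
  left_inv := fun ⟨D, hD⟩ => by
    by_cases h : Ncase D <;> simp [h]
  right_inv := fun x => by
    rcases x with ⟨D, h⟩ | ⟨D, h⟩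
    · simp [h]
    · have := not_N_of_R hr h
      simp [this]

theorem card_data : ∀ s m n r : ℕ, m + n + r = s → 1 ≤ m → 1 ≤ n → 1 ≤ r →
    Nat.card (Data m n r) = T' (m-1) (n-1) (r-1) := by
  intro s
  induction s using Nat.strong_induction_on with
  | _ s IH =>
  intro m n r hs hm hn hr
  by_cases hbase : m = 1 ∧ n = 1 ∧ r = 1
  · obtain ⟨rfl, rfl, rfl⟩ := hbase
    rw [card111]
    simp [T']
  · classical
    have e1 : Nat.card (Data m n r) =
        Nat.card {D : Data m n r // Mcase D} + Nat.card {D : Data m n r // ¬ Mcase D} := by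
      rw [← Nat.card_sum]
      exact (Nat.card_congr (Equiv.sumCompl _)).symm
    have e2 : Nat.card {D : Data m n r // ¬ Mcase D} =
        Nat.card {D : Data m n r // Ncase D} + Nat.card {D : Data m n r // Rcase D} := by
      rw [← Nat.card_sum]
      exact Nat.card_congr (eqNR hr)
    have hMcard : Nat.card {D : Data m n r // Mcase D} =
        if m = 1 then 0 else T' (m-2) (n-1) (r-1) := by
      by_cases hM : m = 1
      · rw [if_pos hM]
        subst hM
        haveI : IsEmpty {D : Data 1 n r // Mcase D} :=
          ⟨fun ⟨D, hD⟩ => by have := D.g_pos 1; rw [Mcase] at hD; omega⟩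
        exact Nat.card_of_isEmpty
      · rw [if_neg hM]
        obtain ⟨m', rfl⟩ : ∃ m', m = m' + 1 := ⟨m-1, by omega⟩
        rw [Nat.card_congr (equivM m' n r hr)]
        rw [IH (m'+n+r) (by omega) m' n r rfl (by omega) hn hr]
        rw [show m'+1-2 = m'-1 from by omega]
    have hNcard : Nat.card {D : Data m n r // Ncase D} =
        if n = 1 then 0 else T' (m-1) (n-2) (r-1) := by
      by_cases hN : n = 1
      · rw [if_pos hN]
        subst hN
        haveI : IsEmpty {D : Data m 1 r // Ncase D} :=
          ⟨fun ⟨D, hD⟩ => by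
            have h1 := D.d_le le_rfl hr m
            have h2 := D.h0
            have h3 := D.h_pos 1
            rw [Ncase] at hD
            rw [show (1:ℕ)-1 = 0 from rfl] at h1
            omega⟩
        exact Nat.card_of_isEmpty
      · rw [if_neg hN]
        obtain ⟨n', rfl⟩ : ∃ n', n = n' + 1 := ⟨n-1, by omega⟩
        rw [Nat.card_congr (equivN m n' r hr)]
        rw [IH (m+n'+r) (by omega) m n' r rfl hm (by omega) hr]
        rw [show n'+1-2 = n'-1 from by omega]
    have hRcard : Nat.card {D : Data m n r // Rcase D} =
        if r = 1 then 0 else T' (m-1) (n-1) (r-2) := by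
      by_cases hR : r = 1
      · rw [if_pos hR]
        subst hR
        haveI : IsEmpty {D : Data m n 1 // Rcase D} :=
          ⟨fun ⟨D, hD⟩ => by
            rw [Rcase] at hD
            have h1 := D.gr 1 le_rfl
            have h2 := D.hr 1 le_rfl
            exact hbase ⟨by omega, by omega, rfl⟩⟩
        exact Nat.card_of_isEmpty
      · rw [if_neg hR]
        obtain ⟨r', rfl⟩ : ∃ r', r = r' + 1 := ⟨r-1, by omega⟩
        rw [Nat.card_congr (equivR m n r' hm hn (by omega))]
        rw [IH (m+n+r') (by omega) m n r' rfl hm hn (by omega)]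
        rw [show r'+1-2 = r'-1 from by omega]
    rw [e1, e2, hMcard, hNcard, hRcard]
    by_cases hM : m = 1 <;> by_cases hN : n = 1 <;> by_cases hR : r = 1
    · exact absurd ⟨hM, hN, hR⟩ hbase
    · -- m=1, n=1, r≥2
      subst hM; subst hN
      simp only [Nat.sub_self, reduceIte]
      rw [if_neg hR, T'_00c, T'_00c]
    · -- m=1, n≥2, r=1
      subst hM; subst hR
      simp only [Nat.sub_self, reduceIte]
      rw [if_neg hN, T'_0b0, T'_0b0]
    · -- m=1, n≥2, r≥2
      subst hM
      simp only [Nat.sub_self, reduceIte]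
      rw [if_neg hN, if_neg hR]
      obtain ⟨b, rfl⟩ : ∃ b, n = b + 2 := ⟨n-2, by omega⟩
      obtain ⟨c, rfl⟩ : ∃ c, r = c + 2 := ⟨r-2, by omega⟩
      rw [show b+2-1 = b+1 from by omega,
        show c+2-1 = c+1 from by omega, show b+2-2 = b from by omega,
        show c+2-2 = c from by omega, T'_L2]
      omega
    · -- m≥2, n=1, r=1
      subst hN; subst hR
      simp only [Nat.sub_self, reduceIte]
      rw [if_neg hM, T'_a00, T'_a00]
    · -- m≥2, n=1, r≥2
      subst hN
      simp only [Nat.sub_self, reduceIte]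
      rw [if_neg hM, if_neg hR]
      obtain ⟨a, rfl⟩ : ∃ a, m = a + 2 := ⟨m-2, by omega⟩
      obtain ⟨c, rfl⟩ : ∃ c, r = c + 2 := ⟨r-2, by omega⟩
      rw [show a+2-1 = a+1 from by omega,
        show c+2-1 = c+1 from by omega, show a+2-2 = a from by omega,
        show c+2-2 = c from by omega, T'_L3]
      omega
    · -- m≥2, n≥2, r=1
      subst hR
      simp only [Nat.sub_self, reduceIte]
      rw [if_neg hM, if_neg hN]
      obtain ⟨a, rfl⟩ : ∃ a, m = a + 2 := ⟨m-2, by omega⟩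
      obtain ⟨b, rfl⟩ : ∃ b, n = b + 2 := ⟨n-2, by omega⟩
      rw [show a+2-1 = a+1 from by omega,
        show b+2-1 = b+1 from by omega, show a+2-2 = a from by omega,
        show b+2-2 = b from by omega, T'_L4]
      omega
    · -- all ≥ 2
      rw [if_neg hM, if_neg hN, if_neg hR]
      obtain ⟨a, rfl⟩ : ∃ a, m = a + 2 := ⟨m-2, by omega⟩
      obtain ⟨b, rfl⟩ : ∃ b, n = b + 2 := ⟨n-2, by omega⟩
      obtain ⟨c, rfl⟩ : ∃ c, r = c + 2 := ⟨r-2, by omega⟩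
      rw [show a+2-1 = a+1 from by omega, show b+2-1 = b+1 from by omega,
        show c+2-1 = c+1 from by omega, show a+2-2 = a from by omega,
        show b+2-2 = b from by omega, show c+2-2 = c from by omega, T'_L1]
      omega

end Data

theorem multinomial_eq (a b c : ℕ) :
    (a+b+c).factorial / (a.factorial * b.factorial * c.factorial) = T' a b c := by
  have h1 : (a+b+c).choose a * a.factorial * (b+c).factorial = (a+b+c).factorial := by
    have := Nat.choose_mul_factorial_mul_factorial (Nat.le_add_right a (b+c))
    rw [show a+(b+c) = a+b+c from by ring, show a+b+c-a = b+c from by omega] at this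
    exact this
  have h2 : (b+c).choose b * b.factorial * c.factorial = (b+c).factorial := by
    have := Nat.choose_mul_factorial_mul_factorial (Nat.le_add_right b c)
    rw [show b+c-b = c from by omega] at this
    exact this
  apply Nat.div_eq_of_eq_mul_left
  · exact Nat.mul_pos (Nat.mul_pos a.factorial_pos b.factorial_pos) c.factorial_pos
  · show (a+b+c).factorial = (a+b+c).choose a * (b+c).choose b * _
    rw [← h1, ← h2]
    ring

end DblDet

theorem stmt_15 (m n r : ℕ) (hm : 0 < m) (hn : 0 < n) (hr : 0 < r) :
    Nat.card {F : Set (ℕ × ℕ × ℕ) // MaxDiagFree m n r F} =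
      (m + n + r - 3).factorial /
        ((m - 1).factorial * (n - 1).factorial * (r - 1).factorial) := by
  have key : Nat.card {F : Set (ℕ × ℕ × ℕ) // MaxDiagFree m n r F} =
      Nat.card (DblDet.Data m n r) := by
    refine (Nat.card_congr (Equiv.ofBijective
      (fun D : DblDet.Data m n r => (⟨D.facet, D.facet_max⟩ :
        {F : Set (ℕ × ℕ × ℕ) // MaxDiagFree m n r F})) ⟨?_, ?_⟩)).symm
    · intro D E hDE
      exact DblDet.Data.facet_injective (congrArg Subtype.val hDE)
    · rintro ⟨F, hF⟩
      obtain ⟨D, hD⟩ := (DblDet.maxDiagFree_iff hm hn hr).mp hF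
      exact ⟨D, Subtype.ext hD⟩
  rw [key, DblDet.Data.card_data (m+n+r) m n r rfl hm hn hr]
  rw [show m+n+r-3 = (m-1)+(n-1)+(r-1) from by omega]
  exact (DblDet.multinomial_eq (m-1) (n-1) (r-1)).symm
end
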